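/- arXiv:2208.13139 — 8 statements merged into one kernel-verified Lean document; each statement's English description precedes it below -/
import Mathlib

section
/- Let k ≥ 0 be an integer and G be a graph with m edges where m ≥ max{(k²+2k+2)²+k+1, (2k+3)²+k+1}. If the spectral radius of the adjacency matrix of G satisfies ρ(G) ≥ √(m−k), then G contains a star K_{1,m−k} as a subgraph or G contains a 4-cycle. -/
open Finset Matrix

set_option maxHeartbeats 1000000




private lemma leafH1 (ρ kk r t t' T S : ℝ)
    (hρ3 : 2*kk+3 < ρ) (hk0 : 0 ≤ kk) (hR1 : 1 ≤ r - kk) (hS : r - kk ≤ S)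
    (E2 : ρ*S ≤ t' + T) (hT1 : T*(ρ-1) ≤ t) (htle : t ≤ 2*r) (ht'le : t' ≤ 2*r) :
    False := by
  have hX : (0:ℝ) ≤ ρ - 1 := by linarith
  have hρ0 : (0:ℝ) ≤ ρ := by linarith
  have a1 : ρ*S*(ρ-1) ≤ (t' + T)*(ρ-1) := mul_le_mul_of_nonneg_right E2 hX
  have a2 : t'*(ρ-1) ≤ (2*r)*(ρ-1) := mul_le_mul_of_nonneg_right ht'le hX
  have a3 : ρ*(r-kk)*(ρ-1) ≤ ρ*S*(ρ-1) := by
    have := mul_le_mul_of_nonneg_left hS hρ0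
    exact mul_le_mul_of_nonneg_right this hX
  have c1 : ρ*(r-kk)*(ρ-1) ≤ 2*r*ρ := by nlinarith
  have c2 : (r-kk)*(ρ-1) ≤ 2*r := by
    have hρpos : (0:ℝ) < ρ := by linarith
    nlinarith
  nlinarith [mul_le_mul_of_nonneg_right hR1 (show (0:ℝ) ≤ ρ - 3 by linarith)]

private lemma leafC2 (ρ kk r t t' T S HH : ℝ)
    (hρ3 : 2*kk+3 < ρ) (hk0 : 0 ≤ kk) (hR1 : 1 ≤ r - kk) (hS : r - kk ≤ S)
    (E2 : ρ*S ≤ t' + T) (E3 : ρ*T ≤ t + HH*T) (hT0 : 0 ≤ T)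
    (htle : t ≤ 2*r) (hH2 : 2 ≤ HH) (c2H : 2*HH + 1 ≤ ρ)
    (ht'' : t' ≤ 2*r - 2) :
    False := by
  have hT2 : T*(ρ-HH) ≤ t := by nlinarith
  have hT2' : T*(ρ+1) ≤ 4*r := by nlinarith
  have hX : (0:ℝ) ≤ ρ + 1 := by linarith
  have hρ0 : (0:ℝ) ≤ ρ := by linarith
  have a1 : ρ*S*(ρ+1) ≤ (t' + T)*(ρ+1) := mul_le_mul_of_nonneg_right E2 hX
  have a2 : t'*(ρ+1) ≤ (2*r-2)*(ρ+1) := mul_le_mul_of_nonneg_right ht'' hX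
  have a3 : ρ*(r-kk)*(ρ+1) ≤ ρ*S*(ρ+1) := by
    have := mul_le_mul_of_nonneg_left hS hρ0
    exact mul_le_mul_of_nonneg_right this hX
  have c1 : (r-kk)*ρ*(ρ+1) ≤ (2*r-2)*(ρ+1) + 4*r := by nlinarith
  nlinarith [mul_nonneg (show (0:ℝ) ≤ r-kk-1 by linarith)
      (mul_nonneg (show (0:ℝ) ≤ ρ-3 by linarith) (show (0:ℝ) ≤ ρ+2 by linarith)),
    mul_pos (show (0:ℝ) < ρ-(2*kk+3) by linarith) (show (0:ℝ) < ρ by linarith)]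

private lemma leafKbig (ρ kk r : ℝ)
    (hk2 : 2 ≤ kk) (hR1 : 1 ≤ r - kk)
    (hρκ : kk^2+2*kk+2 < ρ)
    (key : (r-kk)*ρ + ρ < 4*r + 3) :
    False := by
  have hm1 : (r-kk)*(kk^2+2*kk+2) ≤ (r-kk)*ρ :=
    mul_le_mul_of_nonneg_left (le_of_lt hρκ) (by linarith)
  nlinarith [mul_nonneg (show (0:ℝ) ≤ r-kk-1 by linarith)
      (show (0:ℝ) ≤ kk^2+2*kk-2 by nlinarith),
    mul_nonneg (show (0:ℝ) ≤ kk-2 by linarith) (show (0:ℝ) ≤ kk by linarith)]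

private lemma leafK0H3 (ρ r t' : ℝ)
    (hρ10 : 10 ≤ ρ^2) (hρ3 : 3 < ρ) (hr1 : 1 ≤ r)
    (hstar2 : r*ρ ≤ t' + 2*r) (ht'4 : t' ≤ 2*r - 4)
    (hB : r*(ρ-1) ≤ ρ^2) :
    False := by
  have hA : (4:ℝ) ≤ r*(4-ρ) := by nlinarith
  have hρ4 : ρ < 4 := by nlinarith
  have h1 : 4*(ρ-1) ≤ (r*(4-ρ))*(ρ-1) := mul_le_mul_of_nonneg_right hA (by linarith)
  have h2 : (r*(ρ-1))*(4-ρ) ≤ ρ^2*(4-ρ) := mul_le_mul_of_nonneg_right hB (by linarith)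
  nlinarith [mul_nonneg (show (0:ℝ) ≤ ρ-3 by linarith) (show (0:ℝ) ≤ ρ^2-10 by linarith),
    mul_pos (show (0:ℝ) < 4-ρ by linarith) (show (0:ℝ) < ρ-3 by linarith)]

private lemma leafK0H2 (ρ r t t' T S : ℝ)
    (hρ10 : 10 ≤ ρ^2) (hρ3 : 3 < ρ) (hr2 : 2 ≤ r)
    (hSr : r ≤ S) (E2 : ρ*S ≤ t' + T) (hT2 : T*(ρ-2) ≤ t)
    (hB : r*(ρ-1) ≤ ρ^2)
    (E5R : 2*t ≤ t' + 2*r) (ht'2 : t' ≤ 2*r - 2) :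
    False := by
  have hX : (0:ℝ) ≤ ρ - 2 := by linarith
  have hρ0 : (0:ℝ) ≤ ρ := by linarith
  have a1 : ρ*S*(ρ-2) ≤ (t' + T)*(ρ-2) := mul_le_mul_of_nonneg_right E2 hX
  have a3 : ρ*r*(ρ-2) ≤ ρ*S*(ρ-2) := by
    have := mul_le_mul_of_nonneg_left hSr hρ0
    exact mul_le_mul_of_nonneg_right this hX
  have a2 : t'*(ρ-2) ≤ (2*r-2)*(ρ-2) := mul_le_mul_of_nonneg_right ht'2 hX
  have D1 : 2*ρ*r*(ρ-2) ≤ t'*(2*ρ-3) + 2*r := by nlinarith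
  have D2 : ρ^2*r - 4*ρ*r + 2*r + 2*ρ - 3 ≤ 0 := by nlinarith
  by_cases cQ : (0:ℝ) ≤ ρ^2 - 4*ρ + 2
  · nlinarith [mul_nonneg (show (0:ℝ) ≤ r by linarith) cQ]
  · push_neg at cQ
    have D2' : (2*ρ-3) ≤ r*(4*ρ-2-ρ^2) := by nlinarith
    have h1 : (2*ρ-3)*(ρ-1) ≤ (r*(4*ρ-2-ρ^2))*(ρ-1) :=
      mul_le_mul_of_nonneg_right D2' (by linarith)
    have h2 : (r*(ρ-1))*(4*ρ-2-ρ^2) ≤ ρ^2*(4*ρ-2-ρ^2) :=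
      mul_le_mul_of_nonneg_right hB (by linarith)
    nlinarith [mul_nonneg (show (0:ℝ) ≤ ρ^2-10 by linarith) (sq_nonneg (ρ-2)),
      sq_nonneg (ρ-3)]

private lemma lt_of_sq_lt (c ρ : ℝ) (h0 : 0 ≤ ρ) (hc : 0 ≤ c) (h : c^2 + 1 ≤ ρ^2) : c < ρ := by
  by_contra hcon
  push_neg at hcon
  nlinarith [mul_self_le_mul_self h0 hcon]

private lemma endgame_arith (k r H t t' a m : ℕ) (ρ S T : ℝ)
    (hρ0 : 0 ≤ ρ)
    (E1 : ρ^2 ≤ (a:ℝ) + S)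
    (E2 : ρ*S ≤ (t':ℝ) + T)
    (E3 : ρ*T ≤ (t:ℝ) + (H:ℝ)*T)
    (E4a : T ≤ 2*(r:ℝ)) (E4b : 0 ≤ T)
    (E5 : 2*t ≤ t' + 2*r)
    (E6 : t' ≤ t)
    (E7 : t' + 2*H ≤ 2*r + 2)
    (E8 : t' ≤ a)
    (EH : H ≤ r)
    (E10 : (m:ℝ) - (k:ℝ) ≤ ρ^2)
    (E11 : a + r = m)
    (E12 : k + 1 ≤ r)
    (E13 : (2*k+3)^2 + k + 1 ≤ m)
    (E14 : (k^2+2*k+2)^2 + k + 1 ≤ m) :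
    False := by
  have E5R : 2*(t:ℝ) ≤ (t':ℝ) + 2*(r:ℝ) := by exact_mod_cast E5
  have E6R : (t':ℝ) ≤ (t:ℝ) := by exact_mod_cast E6
  have E7R : (t':ℝ) + 2*(H:ℝ) ≤ 2*(r:ℝ) + 2 := by exact_mod_cast E7
  have E8R : (t':ℝ) ≤ (a:ℝ) := by exact_mod_cast E8
  have EHR : (H:ℝ) ≤ (r:ℝ) := by exact_mod_cast EH
  have E11R : (a:ℝ) + (r:ℝ) = (m:ℝ) := by exact_mod_cast E11
  have E12R : (k:ℝ) + 1 ≤ (r:ℝ) := by exact_mod_cast E12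
  have E13R : (2*(k:ℝ)+3)^2 + (k:ℝ) + 1 ≤ (m:ℝ) := by exact_mod_cast E13
  have hk0 : (0:ℝ) ≤ (k:ℝ) := Nat.cast_nonneg k
  have hρsq : (2*(k:ℝ)+3)^2 + 1 ≤ ρ^2 := by linarith
  have hρ3 : 2*(k:ℝ)+3 < ρ := lt_of_sq_lt _ _ hρ0 (by linarith) hρsq
  have hρ3' : (3:ℝ) < ρ := by linarith
  have hS : (r:ℝ) - (k:ℝ) ≤ S := by linarith
  have hR1 : (1:ℝ) ≤ (r:ℝ) - (k:ℝ) := by linarith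
  have htle : (t:ℝ) ≤ 2*(r:ℝ) := by linarith
  have ht'le : (t':ℝ) ≤ 2*(r:ℝ) := by linarith
  rcases le_or_gt H 1 with cH | cH
  · -- H ≤ 1
    have hHR : (H:ℝ) ≤ 1 := by exact_mod_cast cH
    have hT1 : T*(ρ-1) ≤ (t:ℝ) := by nlinarith [mul_le_mul_of_nonneg_right hHR E4b]
    exact leafH1 ρ (k:ℝ) (r:ℝ) (t:ℝ) (t':ℝ) T S hρ3 hk0 hR1 hS E2 hT1 htle ht'le
  · have cH2R : (2:ℝ) ≤ (H:ℝ) := by exact_mod_cast cH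
    by_cases c2H : 2*(H:ℝ) + 1 ≤ ρ
    · -- 2H+1 ≤ ρ
      have ht'' : (t':ℝ) ≤ 2*(r:ℝ) - 2 := by linarith
      exact leafC2 ρ (k:ℝ) (r:ℝ) (t:ℝ) (t':ℝ) T S (H:ℝ)
        hρ3 hk0 hR1 hS E2 E3 E4b htle cH2R c2H ht''
    · push_neg at c2H
      by_cases cT3 : (t':ℝ) + 2*(r:ℝ) < ((r:ℝ)-(k:ℝ))*ρ
      · have h1 : ((r:ℝ)-(k:ℝ))*ρ ≤ ρ*S := by
          have := mul_le_mul_of_nonneg_left hS hρ0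
          linarith [this]
        linarith
      · push_neg at cT3
        have key : ((r:ℝ)-(k:ℝ))*ρ + ρ < 4*(r:ℝ) + 3 := by linarith
        rcases Nat.lt_or_ge k 2 with hk2 | hk2
        · interval_cases k
          · -- k = 0
            have hρ10 : (10:ℝ) ≤ ρ^2 := by
              have h10 : (10:ℕ) ≤ m := by omega
              have h10R : (10:ℝ) ≤ (m:ℝ) := by exact_mod_cast h10
              have : (10:ℝ) ≤ (m:ℝ) - (0:ℕ) := by simpa using h10R
              calc (10:ℝ) ≤ (m:ℝ) - ((0:ℕ):ℝ) := by simpa using h10R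
                _ ≤ ρ^2 := E10
            have hstar2 : (r:ℝ)*ρ ≤ (t':ℝ) + 2*(r:ℝ) := by
              have h := cT3; push_cast at h ⊢; linarith
            have hr1R : (1:ℝ) ≤ (r:ℝ) := by push_cast at E12R; linarith
            have hB : (r:ℝ)*(ρ-1) ≤ ρ^2 := by
              have hE10' : (m:ℝ) ≤ ρ^2 := by push_cast at E10; linarith
              nlinarith
            by_cases cH3 : 3 ≤ H
            · have cH3R : (3:ℝ) ≤ (H:ℝ) := by exact_mod_cast cH3
              have ht'4 : (t':ℝ) ≤ 2*(r:ℝ) - 4 := by linarith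
              exact leafK0H3 ρ (r:ℝ) (t':ℝ) hρ10 hρ3' hr1R hstar2 ht'4 hB
            · have hH2 : H = 2 := by omega
              have hHR2 : (H:ℝ) = 2 := by exact_mod_cast hH2
              have hr2 : (2:ℝ) ≤ (r:ℝ) := by rw [hHR2] at cH2R; linarith [EHR]
              have hT2 : T*(ρ-2) ≤ (t:ℝ) := by rw [hHR2] at E3; nlinarith
              have hSr : (r:ℝ) ≤ S := by push_cast at hS; linarith
              have ht'2 : (t':ℝ) ≤ 2*(r:ℝ) - 2 := by rw [hHR2] at E7R; linarith
              exact leafK0H2 ρ (r:ℝ) (t:ℝ) (t':ℝ) T S hρ10 hρ3' hr2 hSr E2 hT2 hB E5R ht'2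
          · -- k = 1
            have hρ26 : (26:ℝ) ≤ ρ^2 := by
              have h27 : (27:ℕ) ≤ m := by omega
              have h27R : (27:ℝ) ≤ (m:ℝ) := by exact_mod_cast h27
              push_cast at E10; linarith
            have hρ5 : (5:ℝ) < ρ := by nlinarith
            have hkey : (r:ℝ)*(ρ-4) < 3 := by push_cast at key; nlinarith
            have hrlt : (r:ℝ) < 3 := by nlinarith [show (2:ℝ) ≤ (r:ℝ) by push_cast at E12R; linarith]
            have hr3 : r < 3 := by exact_mod_cast hrlt
            have hH2 : H = 2 := by omega
            rw [hH2] at c2H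
            norm_num at c2H
            linarith
        · -- k ≥ 2
          have hk2R : (2:ℝ) ≤ (k:ℝ) := by exact_mod_cast hk2
          have E14R : ((k:ℝ)^2+2*(k:ℝ)+2)^2 + (k:ℝ) + 1 ≤ (m:ℝ) := by exact_mod_cast E14
          have hρκsq : ((k:ℝ)^2+2*(k:ℝ)+2)^2 + 1 ≤ ρ^2 := by linarith
          have hρκ : (k:ℝ)^2+2*(k:ℝ)+2 < ρ :=
            lt_of_sq_lt _ _ hρ0 (by nlinarith) hρκsq
          exact leafKbig ρ (k:ℝ) (r:ℝ) hk2R hR1 hρκ key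



private lemma codeg_le_one {V : Type*} [Fintype V] [DecidableEq V]
    (G : SimpleGraph V) [DecidableRel G.Adj]
    (hC4 : ¬ ∃ a b c d : V, a ≠ b ∧ a ≠ c ∧ a ≠ d ∧ b ≠ c ∧ b ≠ d ∧ c ≠ d ∧
      G.Adj a b ∧ G.Adj b c ∧ G.Adj c d ∧ G.Adj d a)
    {z w : V} (hzw : z ≠ w) :
    ((G.neighborFinset z) ∩ (G.neighborFinset w)).card ≤ 1 := by
  by_contra h
  push_neg at h
  obtain ⟨p, hp, q, hq, hpq⟩ := Finset.one_lt_card.mp h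
  simp only [Finset.mem_inter, SimpleGraph.mem_neighborFinset] at hp hq
  exact hC4 ⟨z, p, w, q, hp.1.ne, hzw, hq.1.ne, hp.2.ne', hpq, hq.2.ne,
    hp.1, hp.2.symm, hq.2, hq.1.symm⟩




-- Perron step: produce a nonnegative eigenvector for ρ
private lemma perron_step {V : Type*} [Fintype V] [DecidableEq V]
    (G : SimpleGraph V) [DecidableRel G.Adj]
    (ρ : ℝ) (x : V → ℝ) (hx0 : x ≠ 0) (hx : (G.adjMatrix ℝ).mulVec x = ρ • x)
    (hlargest : ∀ (μ : ℝ) (y : V → ℝ), y ≠ 0 → (G.adjMatrix ℝ).mulVec y = μ • y → μ ≤ ρ) :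
    ∃ y : V → ℝ, (∀ v, 0 ≤ y v) ∧ y ≠ 0 ∧ (G.adjMatrix ℝ).mulVec y = ρ • y := by
  classical
  set A := G.adjMatrix ℝ with hA
  have hAnn : ∀ v w, 0 ≤ A v w := by
    intro v w
    simp only [hA, SimpleGraph.adjMatrix_apply]
    split_ifs <;> norm_num
  have hAH : A.IsHermitian := by
    have hs := G.isSymm_adjMatrix (α := ℝ)
    unfold Matrix.IsHermitian
    ext i j
    simp only [Matrix.conjTranspose_apply, star_trivial]
    exact congrFun (congrFun hs i) j
  set M : Matrix V V ℝ := ρ • (1 : Matrix V V ℝ) - A with hM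
  have hMH : M.IsHermitian := by
    unfold Matrix.IsHermitian
    rw [hM, Matrix.conjTranspose_sub, Matrix.conjTranspose_smul, Matrix.conjTranspose_one, hAH]
    simp
  have hMpsd : M.PosSemidef := by
    apply (Matrix.IsHermitian.posSemidef_iff_eigenvalues_nonneg hMH).mpr
    intro i
    by_contra hneg
    push_neg at hneg
    have hvec := Matrix.IsHermitian.mulVec_eigenvectorBasis hMH i
    set v : V → ℝ := ⇑(Matrix.IsHermitian.eigenvectorBasis hMH i) with hv
    have hvne : v ≠ 0 := by
      intro hzero
      have := (Matrix.IsHermitian.eigenvectorBasis hMH).orthonormal.ne_zero i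
      apply this
      ext w
      exact congrFun hzero w
    have hMvec : M.mulVec v = ρ • v - A.mulVec v := by
      rw [hM, Matrix.sub_mulVec, Matrix.smul_mulVec, Matrix.one_mulVec]
    have hAv : A.mulVec v = (ρ - Matrix.IsHermitian.eigenvalues hMH i) • v := by
      have h1 : ρ • v - A.mulVec v = Matrix.IsHermitian.eigenvalues hMH i • v := by
        rw [← hMvec]; exact hvec
      funext w
      have h2 := congrFun h1 w
      simp only [Pi.sub_apply, Pi.smul_apply, smul_eq_mul] at h2 ⊢
      linarith
    have := hlargest _ v hvne hAv
    linarith [show (0 : V → ℝ) i = 0 from rfl]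
  -- now take y = |x|
  refine ⟨fun v => |x v|, fun v => abs_nonneg _, ?_, ?_⟩
  · intro h
    apply hx0
    funext v
    have := congrFun h v
    simpa [abs_eq_zero] using this
  · set y : V → ℝ := fun v => |x v| with hy
    have hxAx : x ⬝ᵥ (A *ᵥ x) = ρ * (x ⬝ᵥ x) := by
      rw [hx]
      simp [dotProduct_smul, smul_eq_mul]
    have hxx : x ⬝ᵥ x = y ⬝ᵥ y := by
      unfold dotProduct
      exact Finset.sum_congr rfl fun v _ => by simp [hy, abs_mul_abs_self]
    have hyAy : x ⬝ᵥ (A *ᵥ x) ≤ y ⬝ᵥ (A *ᵥ y) := by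
      unfold dotProduct Matrix.mulVec dotProduct
      refine Finset.sum_le_sum fun v _ => ?_
      rw [Finset.mul_sum, Finset.mul_sum]
      refine Finset.sum_le_sum fun w _ => ?_
      calc x v * (A v w * x w) = A v w * (x v * x w) := by ring
        _ ≤ A v w * |x v * x w| := mul_le_mul_of_nonneg_left (le_abs_self _) (hAnn v w)
        _ = y v * (A v w * y w) := by rw [abs_mul]; simp [hy]; ring
    have hyMy : y ⬝ᵥ (M *ᵥ y) ≤ 0 := by
      have hexp : y ⬝ᵥ (M *ᵥ y) = ρ * (y ⬝ᵥ y) - y ⬝ᵥ (A *ᵥ y) := by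
        rw [hM, Matrix.sub_mulVec, Matrix.smul_mulVec, Matrix.one_mulVec]
        rw [dotProduct_sub, dotProduct_smul, smul_eq_mul]
      rw [hexp, ← hxx]
      linarith
    have hpsd : (0:ℝ) ≤ y ⬝ᵥ (M *ᵥ y) := by
      have h := hMpsd.dotProduct_mulVec_nonneg y
      have hsy : star y = y := funext fun v => star_trivial _
      rwa [hsy] at h
    have hyMy0 : y ⬝ᵥ (M *ᵥ y) = 0 := le_antisymm hyMy hpsd
    have hMy : M *ᵥ y = 0 := by
      have := (hMpsd.dotProduct_mulVec_zero_iff y).mp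
      apply this
      have hsy : star y = y := funext fun v => star_trivial _
      rw [hsy]; exact hyMy0
    have hMvecy : M *ᵥ y = ρ • y - A *ᵥ y := by
      rw [hM, Matrix.sub_mulVec, Matrix.smul_mulVec, Matrix.one_mulVec]
    rw [hMvecy] at hMy
    exact (sub_eq_zero.mp hMy).symm






theorem star_or_c4_of_large_spectral_radius {V : Type*} [Fintype V] [DecidableEq V]
    (G : SimpleGraph V) [DecidableRel G.Adj]
    (k m : ℕ) (hm : m = G.edgeFinset.card)
    (hsize : max ((k ^ 2 + 2 * k + 2) ^ 2 + k + 1) ((2 * k + 3) ^ 2 + k + 1) ≤ m)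
    (ρ : ℝ) (x : V → ℝ) (hx0 : x ≠ 0) (hx : (G.adjMatrix ℝ).mulVec x = ρ • x)
    (hlargest : ∀ (μ : ℝ) (y : V → ℝ), y ≠ 0 → (G.adjMatrix ℝ).mulVec y = μ • y → μ ≤ ρ)
    (hρ : Real.sqrt ((m : ℝ) - k) ≤ ρ) :
    (∃ v : V, m - k ≤ G.degree v) ∨
    (∃ a b c d : V, a ≠ b ∧ a ≠ c ∧ a ≠ d ∧ b ≠ c ∧ b ≠ d ∧ c ≠ d ∧
      G.Adj a b ∧ G.Adj b c ∧ G.Adj c d ∧ G.Adj d a) := by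
  classical
  by_contra hcon
  push_neg at hcon
  obtain ⟨hstar, hC4⟩ := hcon
  have hC4' : ¬ ∃ a b c d : V, a ≠ b ∧ a ≠ c ∧ a ≠ d ∧ b ≠ c ∧ b ≠ d ∧ c ≠ d ∧
      G.Adj a b ∧ G.Adj b c ∧ G.Adj c d ∧ G.Adj d a := by
    push_neg
    exact hC4
  have mk2 : (k^2 + 2*k + 2)^2 + k + 1 ≤ m := le_trans (le_max_left _ _) hsize
  have mk1 : (2*k + 3)^2 + k + 1 ≤ m := le_trans (le_max_right _ _) hsize
  have hkm : k + 1 ≤ m := le_trans (Nat.le_add_left _ _) mk1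
  have hρ0 : (0:ℝ) ≤ ρ := le_trans (Real.sqrt_nonneg _) hρ
  have hmkR : (0:ℝ) ≤ (m:ℝ) - k := by
    have : (k:ℝ) + 1 ≤ (m:ℝ) := by exact_mod_cast hkm
    linarith
  have hρ2 : (m:ℝ) - k ≤ ρ^2 := by
    nlinarith [Real.sq_sqrt hmkR, Real.sqrt_nonneg ((m:ℝ) - k), hρ]
  -- Perron eigenvector
  obtain ⟨y, hy0, hyne, hyeig⟩ := perron_step G ρ x hx0 hx hlargest
  obtain ⟨v₀, hv₀⟩ : ∃ v, y v ≠ 0 := by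
    by_contra h
    push_neg at h
    exact hyne (funext fun v => h v)
  obtain ⟨u, -, humax⟩ := Finset.exists_max_image Finset.univ y ⟨v₀, Finset.mem_univ v₀⟩
  have hyu : 0 < y u :=
    lt_of_lt_of_le ((hy0 v₀).lt_of_ne (Ne.symm hv₀)) (humax v₀ (Finset.mem_univ v₀))
  set Y : V → ℝ := fun v => y v / y u with hY
  have hY0 : ∀ v, 0 ≤ Y v := fun v => div_nonneg (hy0 v) hyu.le
  have hY1 : ∀ v, Y v ≤ 1 := fun v => div_le_one_of_le₀ (humax v (Finset.mem_univ v)) hyu.le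
  have hYu : Y u = 1 := div_self hyu.ne'
  have eq1 : ∀ v, ∑ w ∈ G.neighborFinset v, Y w = ρ * Y v := by
    intro v
    have h1 := congrFun hyeig v
    rw [SimpleGraph.adjMatrix_mulVec_apply] at h1
    simp only [Pi.smul_apply, smul_eq_mul] at h1
    simp only [hY]
    rw [← Finset.sum_div, h1]
    ring
  -- basic sets and quantities
  set N := G.neighborFinset u with hN
  set s : V → ℕ := fun z => ((G.neighborFinset z).erase u).card with hs
  set n : V → ℕ := fun z => ((G.neighborFinset z) ∩ N).card with hn
  set U' := Finset.univ.erase u with hU'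
  set a := G.degree u with ha
  have huN : u ∉ N := by
    rw [hN, SimpleGraph.mem_neighborFinset]
    exact G.irrefl
  have hNU : N ⊆ U' := fun z hz =>
    Finset.mem_erase.mpr ⟨fun h => huN (h ▸ hz), Finset.mem_univ z⟩
  have ham : a ≤ m := by
    rw [hm, ha]
    have h1 : G.incidenceFinset u ⊆ G.edgeFinset := by
      intro e he
      rw [SimpleGraph.mem_incidenceFinset] at he
      exact SimpleGraph.mem_edgeFinset.mpr he.1
    calc G.degree u = (G.incidenceFinset u).card := (G.card_incidenceFinset_eq_degree u).symm
      _ ≤ G.edgeFinset.card := Finset.card_le_card h1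
  set r := m - a with hr
  have hra : a + r = m := by omega
  have hrk : k + 1 ≤ r := by
    have h1 := hstar u
    rw [← ha] at h1
    omega
  -- handshake
  have hhs : ∑ z, G.degree z = 2 * m := by rw [hm]; exact G.sum_degrees_eq_twice_card_edges
  have hsd : ∀ z, s z + (if u ∈ G.neighborFinset z then 1 else 0) = G.degree z := by
    intro z
    by_cases h : u ∈ G.neighborFinset z
    · rw [if_pos h]
      have h1 := Finset.card_erase_of_mem h
      have h2 : 0 < (G.neighborFinset z).card := Finset.card_pos.mpr ⟨u, h⟩
      have h3 : (G.neighborFinset z).card = G.degree z := G.card_neighborFinset_eq_degree z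
      simp only [hs]
      omega
    · rw [if_neg h, add_zero]
      simp only [hs]
      rw [Finset.erase_eq_of_notMem h, G.card_neighborFinset_eq_degree z]
  have hsum_univ : ∑ z ∈ U', G.degree z + G.degree u = 2*m := by
    rw [← hhs, hU']
    exact Finset.sum_erase_add _ _ (Finset.mem_univ u)
  have hfilterN : U'.filter (fun z => u ∈ G.neighborFinset z) = N := by
    ext z
    constructor
    · intro hz
      rw [Finset.mem_filter] at hz
      rw [hN, SimpleGraph.mem_neighborFinset]
      exact ((SimpleGraph.mem_neighborFinset _ _ _).mp hz.2).symm
    · intro hz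
      have hadj : G.Adj u z := by
        rw [hN, SimpleGraph.mem_neighborFinset] at hz
        exact hz
      refine Finset.mem_filter.mpr ⟨Finset.mem_erase.mpr ⟨hadj.ne', Finset.mem_univ z⟩, ?_⟩
      rw [SimpleGraph.mem_neighborFinset]
      exact hadj.symm
  have hite_sum : ∑ z ∈ U', (if u ∈ G.neighborFinset z then 1 else 0) = a := by
    rw [← Finset.card_filter, hfilterN, ha, hN]
    exact G.card_neighborFinset_eq_degree u
  have hs2r : ∑ z ∈ U', s z = 2*r := by
    have h1 : ∑ z ∈ U', (s z + (if u ∈ G.neighborFinset z then 1 else 0))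
        = ∑ z ∈ U', G.degree z := Finset.sum_congr rfl (fun z _ => hsd z)
    rw [Finset.sum_add_distrib, hite_sum] at h1
    omega
  -- t, t'
  set t := ∑ z ∈ N, s z with ht
  set t' := ∑ z ∈ N, n z with ht'
  have hzneu : ∀ z ∈ N, z ≠ u := fun z hz => (Finset.mem_erase.mp (hNU hz)).1
  have hcod : ∀ z, z ≠ u → n z ≤ 1 := fun z hz => codeg_le_one G hC4' hz
  have E8 : t' ≤ a := by
    calc t' ≤ ∑ _z ∈ N, 1 := Finset.sum_le_sum (fun z hz => hcod z (hzneu z hz))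
      _ = N.card := by simp
      _ = a := by rw [hN, ha]; exact G.card_neighborFinset_eq_degree u
  have hns : ∀ z, z ≠ u → n z ≤ s z := by
    intro z hz
    apply Finset.card_le_card
    intro w hw
    rw [Finset.mem_inter] at hw
    exact Finset.mem_erase.mpr ⟨fun h => huN (h ▸ hw.2), hw.1⟩
  have E6 : t' ≤ t := Finset.sum_le_sum fun z hz => hns z (hzneu z hz)
  -- f and far
  set f : V → ℕ := fun z => (((G.neighborFinset z).erase u) \ N).card with hf
  have hnf : ∀ z, z ≠ u → n z + f z = s z := by
    intro z hz
    have h1 : ((G.neighborFinset z).erase u) ∩ N = (G.neighborFinset z) ∩ N := by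
      ext w
      simp only [Finset.mem_inter, Finset.mem_erase]
      constructor
      · rintro ⟨⟨-, hw⟩, hwN⟩; exact ⟨hw, hwN⟩
      · rintro ⟨hw, hwN⟩; exact ⟨⟨fun h => huN (h ▸ hwN), hw⟩, hwN⟩
    have h2 := Finset.card_inter_add_card_sdiff ((G.neighborFinset z).erase u) N
    rw [h1] at h2
    exact h2
  set Far := U' \ N with hFar
  set tf := ∑ z ∈ Far, s z with htf
  have hsplit : tf + t = 2*r := by
    rw [htf, ht, hFar, ← hs2r]
    exact Finset.sum_sdiff hNU
  have hFt : t' + ∑ z ∈ N, f z = t := by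
    rw [ht', ht, ← Finset.sum_add_distrib]
    exact Finset.sum_congr rfl fun z hz => hnf z (hzneu z hz)
  have herase_filter : ∀ z, (G.neighborFinset z).erase u = U'.filter (fun w => G.Adj z w) := by
    intro z; ext w
    simp only [Finset.mem_erase, SimpleGraph.mem_neighborFinset, hU', Finset.mem_filter,
      Finset.mem_univ, true_and]
    tauto
  have hsdiff_filter : ∀ z, ((G.neighborFinset z).erase u) \ N
      = Far.filter (fun w => G.Adj z w) := by
    intro z; ext w
    simp only [Finset.mem_sdiff, Finset.mem_erase, SimpleGraph.mem_neighborFinset, hFar, hU',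
      Finset.mem_filter, Finset.mem_univ, true_and]
    tauto
  have hFswap : ∑ z ∈ N, f z = ∑ w ∈ Far, (N.filter (fun z => G.Adj z w)).card := by
    have h1 : ∀ z, f z = ∑ w ∈ Far, if G.Adj z w then 1 else 0 := by
      intro z
      simp only [hf]
      rw [hsdiff_filter z, Finset.card_filter]
    calc ∑ z ∈ N, f z = ∑ z ∈ N, ∑ w ∈ Far, (if G.Adj z w then 1 else 0) :=
          Finset.sum_congr rfl (fun z _ => h1 z)
      _ = ∑ w ∈ Far, ∑ z ∈ N, (if G.Adj z w then 1 else 0) := Finset.sum_comm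
      _ = ∑ w ∈ Far, (N.filter (fun z => G.Adj z w)).card :=
          Finset.sum_congr rfl fun w _ => (Finset.card_filter _ _).symm
  have hcnt_le_s : ∀ w, w ≠ u → (N.filter (fun z => G.Adj z w)).card ≤ s w := by
    intro w hw
    apply Finset.card_le_card
    intro z hz
    rw [Finset.mem_filter] at hz
    refine Finset.mem_erase.mpr ⟨fun h => huN (h ▸ hz.1), ?_⟩
    rw [SimpleGraph.mem_neighborFinset]
    exact hz.2.symm
  have hFle : ∑ z ∈ N, f z ≤ tf := by
    rw [hFswap, htf]
    exact Finset.sum_le_sum fun w hw =>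
      hcnt_le_s w (Finset.mem_erase.mp (Finset.mem_sdiff.mp hw).1).1
  have E5 : 2*t ≤ t' + 2*r := by omega
  -- s positivity on neighbors
  have hs_pos : ∀ z w, z ≠ u → w ∈ (G.neighborFinset z).erase u → 1 ≤ s w := by
    intro z w hz hw
    rw [Finset.mem_erase, SimpleGraph.mem_neighborFinset] at hw
    have h1 : z ∈ (G.neighborFinset w).erase u :=
      Finset.mem_erase.mpr ⟨hz, (SimpleGraph.mem_neighborFinset _ _ _).mpr hw.2.symm⟩
    exact Finset.card_pos.mpr ⟨z, h1⟩
  -- H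
  set H := U'.sup s with hH
  have hsle : ∀ z ∈ U', s z ≤ H := fun z hz => Finset.le_sup hz
  have hU'ne : U'.Nonempty := by
    by_contra h
    rw [Finset.not_nonempty_iff_eq_empty] at h
    rw [h, Finset.sum_empty] at hs2r
    omega
  obtain ⟨z₀, hz₀U, hz₀⟩ := Finset.exists_mem_eq_sup U' hU'ne s
  have hz₀u : z₀ ≠ u := (Finset.mem_erase.mp hz₀U).1
  have hz₀nmem : z₀ ∉ (G.neighborFinset z₀).erase u := by
    intro h
    exact G.irrefl ((SimpleGraph.mem_neighborFinset _ _ _).mp (Finset.mem_erase.mp h).2)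
  have hsz₀sum : s z₀ ≤ ∑ w ∈ (G.neighborFinset z₀).erase u, s w := by
    calc s z₀ = ∑ _w ∈ (G.neighborFinset z₀).erase u, 1 := by
          simp only [hs]; rw [Finset.card_eq_sum_ones]
      _ ≤ ∑ w ∈ (G.neighborFinset z₀).erase u, s w :=
          Finset.sum_le_sum fun w hw => hs_pos z₀ w hz₀u hw
  have hsub0 : insert z₀ ((G.neighborFinset z₀).erase u) ⊆ U' := by
    intro w hw
    rcases Finset.mem_insert.mp hw with h | h
    · exact h ▸ hz₀U
    · exact Finset.mem_erase.mpr ⟨(Finset.mem_erase.mp h).1, Finset.mem_univ w⟩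
  have EH : H ≤ r := by
    have h1 : ∑ w ∈ insert z₀ ((G.neighborFinset z₀).erase u), s w ≤ ∑ z ∈ U', s z :=
      Finset.sum_le_sum_of_subset hsub0
    rw [Finset.sum_insert hz₀nmem] at h1
    omega
  have E7 : t' + 2*H ≤ 2*r + 2 := by
    by_cases hz₀N : z₀ ∈ N
    · have h1 : f z₀ ≤ ∑ z ∈ N, f z :=
        Finset.single_le_sum (fun z _ => Nat.zero_le _) hz₀N
      have h2 : f z₀ ≤ tf := by
        have hsub : ((G.neighborFinset z₀).erase u) \ N ⊆ Far := by
          intro w hw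
          rw [Finset.mem_sdiff] at hw
          rw [hFar, Finset.mem_sdiff]
          exact ⟨Finset.mem_erase.mpr ⟨(Finset.mem_erase.mp hw.1).1, Finset.mem_univ w⟩, hw.2⟩
        calc f z₀ = ∑ _w ∈ ((G.neighborFinset z₀).erase u) \ N, 1 := by
              simp only [hf]; rw [Finset.card_eq_sum_ones]
          _ ≤ ∑ w ∈ ((G.neighborFinset z₀).erase u) \ N, s w :=
              Finset.sum_le_sum fun w hw => hs_pos z₀ w hz₀u (Finset.mem_sdiff.mp hw).1
          _ ≤ tf := Finset.sum_le_sum_of_subset hsub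
      have h3 := hnf z₀ hz₀u
      have h4 := hcod z₀ hz₀u
      omega
    · have hz₀F : z₀ ∈ Far := by rw [hFar, Finset.mem_sdiff]; exact ⟨hz₀U, hz₀N⟩
      have h1 : n z₀ ≤ ∑ z ∈ N, f z := by
        rw [hFswap]
        have heq : n z₀ = (N.filter (fun z => G.Adj z z₀)).card := by
          simp only [hn]
          congr 1
          ext v
          simp only [Finset.mem_inter, SimpleGraph.mem_neighborFinset, Finset.mem_filter]
          constructor
          · rintro ⟨h1, h2⟩; exact ⟨h2, h1.symm⟩
          · rintro ⟨h1, h2⟩; exact ⟨h2.symm, h1⟩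
        rw [heq]
        exact Finset.single_le_sum (f := fun w => (N.filter (fun z => G.Adj z w)).card)
          (fun w _ => Nat.zero_le _) hz₀F
      have h2 : s z₀ + f z₀ ≤ tf := by
        have hsub : insert z₀ (((G.neighborFinset z₀).erase u) \ N) ⊆ Far := by
          intro w hw
          rcases Finset.mem_insert.mp hw with h | h
          · exact h ▸ hz₀F
          · rw [Finset.mem_sdiff] at h
            rw [hFar, Finset.mem_sdiff]
            exact ⟨Finset.mem_erase.mpr ⟨(Finset.mem_erase.mp h.1).1, Finset.mem_univ w⟩, h.2⟩
        have hnot : z₀ ∉ ((G.neighborFinset z₀).erase u) \ N :=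
          fun h => hz₀nmem (Finset.mem_sdiff.mp h).1
        have hfle : f z₀ ≤ ∑ w ∈ ((G.neighborFinset z₀).erase u) \ N, s w := by
          calc f z₀ = ∑ _w ∈ ((G.neighborFinset z₀).erase u) \ N, 1 := by
                simp only [hf]; rw [Finset.card_eq_sum_ones]
            _ ≤ _ := Finset.sum_le_sum fun w hw => hs_pos z₀ w hz₀u (Finset.mem_sdiff.mp hw).1
        calc s z₀ + f z₀ ≤ ∑ w ∈ insert z₀ (((G.neighborFinset z₀).erase u) \ N), s w := by
              rw [Finset.sum_insert hnot]; omega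
          _ ≤ tf := Finset.sum_le_sum_of_subset hsub
      have h3 := hnf z₀ hz₀u
      omega
  -- W, S, T
  set W := Finset.univ.filter (fun w => w ≠ u ∧ ∃ v, G.Adj u v ∧ G.Adj v w) with hW
  set S := ∑ w ∈ W, Y w with hSdef
  set T := ∑ z ∈ U', (s z : ℝ) * Y z with hTdef
  have hS0 : 0 ≤ S := Finset.sum_nonneg fun w _ => hY0 w
  have hT0 : 0 ≤ T := Finset.sum_nonneg fun z _ => mul_nonneg (Nat.cast_nonneg _) (hY0 z)
  have hT2r : T ≤ 2*(r:ℝ) := by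
    have h1 : T ≤ ∑ z ∈ U', (s z : ℝ) := Finset.sum_le_sum fun z _ =>
      mul_le_of_le_one_right (Nat.cast_nonneg _) (hY1 z)
    have h2 : ∑ z ∈ U', (s z:ℝ) = ((2*r : ℕ):ℝ) := by
      rw [← hs2r]; push_cast; rfl
    rw [h2] at h1
    push_cast at h1
    linarith
  -- sum splitting helper
  have hsum_nbr : ∀ (z : V) (g : V → ℝ), ∑ w ∈ G.neighborFinset z, g w
      = (if u ∈ G.neighborFinset z then g u else 0)
        + ∑ w ∈ U', (if G.Adj z w then g w else 0) := by
    intro z g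
    by_cases h : u ∈ G.neighborFinset z
    · rw [if_pos h, ← Finset.sum_erase_add _ _ h, herase_filter z, Finset.sum_filter]
      ring
    · rw [if_neg h, zero_add, ← Finset.erase_eq_of_notMem h, herase_filter z, Finset.sum_filter]
  -- ρ ≤ a
  have eqA : ∑ v ∈ N, Y v = ρ := by
    have h1 := eq1 u
    rw [hYu, mul_one] at h1
    exact h1
  have G6 : ρ ≤ (a:ℝ) := by
    calc ρ = ∑ v ∈ N, Y v := eqA.symm
      _ ≤ ∑ _v ∈ N, 1 := Finset.sum_le_sum fun v _ => hY1 v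
      _ = (N.card : ℝ) := by simp
      _ = (a:ℝ) := by rw [hN, ha, G.card_neighborFinset_eq_degree u]
  -- G1 : ρ^2 ≤ a + S
  have G1 : ρ^2 ≤ (a:ℝ) + S := by
    have eqC : ∑ v ∈ N, ∑ w ∈ G.neighborFinset v, Y w = ρ^2 := by
      calc ∑ v ∈ N, ∑ w ∈ G.neighborFinset v, Y w = ∑ v ∈ N, ρ * Y v :=
            Finset.sum_congr rfl (fun v _ => eq1 v)
        _ = ρ * ∑ v ∈ N, Y v := by rw [Finset.mul_sum]
        _ = ρ^2 := by rw [eqA]; ring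
    have eqD : ∑ v ∈ N, ∑ w ∈ G.neighborFinset v, Y w
        = (a:ℝ) + ∑ v ∈ N, ∑ w ∈ U', (if G.Adj v w then Y w else 0) := by
      have h1 : ∀ v ∈ N, ∑ w ∈ G.neighborFinset v, Y w
          = 1 + ∑ w ∈ U', (if G.Adj v w then Y w else 0) := by
        intro v hv
        rw [hsum_nbr v Y]
        have hu : u ∈ G.neighborFinset v := by
          rw [SimpleGraph.mem_neighborFinset]
          exact ((SimpleGraph.mem_neighborFinset _ _ _).mp hv).symm
        rw [if_pos hu, hYu]
      rw [Finset.sum_congr rfl h1, Finset.sum_add_distrib]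
      congr 1
      rw [Finset.sum_const]
      simp only [nsmul_eq_mul, mul_one]
      rw [hN, ha, G.card_neighborFinset_eq_degree u]
    have hswap : ∑ v ∈ N, ∑ w ∈ U', (if G.Adj v w then Y w else 0)
        = ∑ w ∈ U', ∑ v ∈ N, (if G.Adj v w then Y w else 0) := Finset.sum_comm
    have hbound : ∀ w ∈ U', ∑ v ∈ N, (if G.Adj v w then Y w else 0)
        ≤ (if w ∈ W then Y w else 0) := by
      intro w hwU
      have hwu : w ≠ u := (Finset.mem_erase.mp hwU).1
      have hcard : (N.filter (fun v => G.Adj v w)).card ≤ 1 := by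
        refine le_trans (Finset.card_le_card ?_) (codeg_le_one G hC4' (Ne.symm hwu))
        intro v hv
        rw [Finset.mem_filter] at hv
        rw [Finset.mem_inter]
        exact ⟨hv.1, (SimpleGraph.mem_neighborFinset _ _ _).mpr hv.2.symm⟩
      have hseq : ∑ v ∈ N, (if G.Adj v w then Y w else 0)
          = ((N.filter (fun v => G.Adj v w)).card : ℝ) * Y w := by
        rw [Finset.sum_ite, Finset.sum_const, Finset.sum_const_zero, add_zero, nsmul_eq_mul]
      rw [hseq]
      rcases Nat.eq_zero_or_pos (N.filter (fun v => G.Adj v w)).card with h0 | hpos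
      · rw [h0]
        simp only [Nat.cast_zero, zero_mul]
        split_ifs
        · exact hY0 w
        · exact le_refl 0
      · have h1 : (N.filter (fun v => G.Adj v w)).card = 1 := le_antisymm hcard hpos
        rw [h1]
        obtain ⟨v, hv⟩ := Finset.card_pos.mp hpos
        rw [Finset.mem_filter] at hv
        have hwW : w ∈ W := by
          rw [hW, Finset.mem_filter]
          exact ⟨Finset.mem_univ w, hwu, v, (SimpleGraph.mem_neighborFinset _ _ _).mp hv.1, hv.2⟩
        rw [if_pos hwW]
        simp
    have hfinal : ∑ w ∈ U', (if w ∈ W then Y w else 0) = S := by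
      rw [← Finset.sum_filter, hSdef]
      congr 1
      ext w
      simp only [Finset.mem_filter, hU', Finset.mem_erase, Finset.mem_univ, true_and, hW]
      tauto
    have := Finset.sum_le_sum hbound
    rw [hfinal] at this
    rw [← eqC, eqD, hswap]
    linarith
  -- G2 : ρ S ≤ t' + T
  have G2 : ρ*S ≤ (t':ℝ) + T := by
    have h1 : ρ*S = ∑ w ∈ W, ∑ z ∈ G.neighborFinset w, Y z := by
      rw [hSdef, Finset.mul_sum]
      exact Finset.sum_congr rfl fun w _ => by rw [eq1 w]
    have h2 : ∀ w ∈ W, ∑ z ∈ G.neighborFinset w, Y z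
        = (if u ∈ G.neighborFinset w then (1:ℝ) else 0)
          + ∑ z ∈ U', (if G.Adj w z then Y z else 0) := by
      intro w _
      rw [hsum_nbr w Y, hYu]
    have h3 : ∑ w ∈ W, (if u ∈ G.neighborFinset w then (1:ℝ) else 0)
        = ((W.filter (fun w => u ∈ G.neighborFinset w)).card : ℝ) := by
      rw [Finset.sum_ite, Finset.sum_const, Finset.sum_const_zero, add_zero, nsmul_eq_mul, mul_one]
    have hπ : (W.filter (fun w => u ∈ G.neighborFinset w)).card ≤ t' := by
      have hsub : W.filter (fun w => u ∈ G.neighborFinset w)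
          ⊆ N.filter (fun w => 1 ≤ n w) := by
        intro w hw
        rw [Finset.mem_filter] at hw
        obtain ⟨hwW, hwu⟩ := hw
        rw [hW, Finset.mem_filter] at hwW
        obtain ⟨-, hwne, v, huv, hvw⟩ := hwW
        refine Finset.mem_filter.mpr ⟨?_, ?_⟩
        · rw [hN, SimpleGraph.mem_neighborFinset]
          exact ((SimpleGraph.mem_neighborFinset _ _ _).mp hwu).symm
        · simp only [hn]
          refine Finset.card_pos.mpr ⟨v, ?_⟩
          rw [Finset.mem_inter]
          exact ⟨(SimpleGraph.mem_neighborFinset _ _ _).mpr hvw.symm,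
            (SimpleGraph.mem_neighborFinset _ _ _).mpr huv⟩
      calc (W.filter (fun w => u ∈ G.neighborFinset w)).card
          ≤ (N.filter (fun w => 1 ≤ n w)).card := Finset.card_le_card hsub
        _ ≤ ∑ w ∈ N.filter (fun w => 1 ≤ n w), n w := by
            rw [Finset.card_eq_sum_ones]
            exact Finset.sum_le_sum fun w hw => (Finset.mem_filter.mp hw).2
        _ ≤ t' := Finset.sum_le_sum_of_subset (Finset.filter_subset _ _)
    have h4 : ∑ w ∈ W, ∑ z ∈ U', (if G.Adj w z then Y z else 0)
        = ∑ z ∈ U', ∑ w ∈ W, (if G.Adj w z then Y z else 0) := Finset.sum_comm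
    have h5 : ∀ z ∈ U', ∑ w ∈ W, (if G.Adj w z then Y z else 0) ≤ (s z : ℝ) * Y z := by
      intro z _
      have hseq : ∑ w ∈ W, (if G.Adj w z then Y z else 0)
          = ((W.filter (fun w => G.Adj w z)).card : ℝ) * Y z := by
        rw [Finset.sum_ite, Finset.sum_const, Finset.sum_const_zero, add_zero, nsmul_eq_mul]
      rw [hseq]
      apply mul_le_mul_of_nonneg_right _ (hY0 z)
      have hsub : W.filter (fun w => G.Adj w z) ⊆ (G.neighborFinset z).erase u := by
        intro w hw
        rw [Finset.mem_filter] at hw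
        have hwu : w ≠ u := by
          have := hw.1
          rw [hW, Finset.mem_filter] at this
          exact this.2.1
        exact Finset.mem_erase.mpr ⟨hwu, (SimpleGraph.mem_neighborFinset _ _ _).mpr hw.2.symm⟩
      exact_mod_cast Finset.card_le_card hsub
    have h6 : ∑ z ∈ U', ∑ w ∈ W, (if G.Adj w z then Y z else 0) ≤ T := by
      rw [hTdef]
      exact Finset.sum_le_sum h5
    have h7 : ((W.filter (fun w => u ∈ G.neighborFinset w)).card : ℝ) ≤ (t' : ℝ) := by
      exact_mod_cast hπ
    calc ρ*S = ∑ w ∈ W, ∑ z ∈ G.neighborFinset w, Y z := h1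
      _ = ∑ w ∈ W, ((if u ∈ G.neighborFinset w then (1:ℝ) else 0)
          + ∑ z ∈ U', (if G.Adj w z then Y z else 0)) := Finset.sum_congr rfl h2
      _ = ∑ w ∈ W, (if u ∈ G.neighborFinset w then (1:ℝ) else 0)
          + ∑ w ∈ W, ∑ z ∈ U', (if G.Adj w z then Y z else 0) := Finset.sum_add_distrib
      _ ≤ (t':ℝ) + T := by rw [h3, h4]; linarith
  -- G3 : ρ T ≤ t + H T
  have G3 : ρ*T ≤ (t:ℝ) + (H:ℝ)*T := by
    have h1 : ρ*T = ∑ z ∈ U', (s z:ℝ) * (∑ w ∈ G.neighborFinset z, Y w) := by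
      rw [hTdef, Finset.mul_sum]
      exact Finset.sum_congr rfl fun z _ => by rw [eq1 z]; ring
    have h2 : ∀ z ∈ U', (s z:ℝ) * (∑ w ∈ G.neighborFinset z, Y w)
        = (if u ∈ G.neighborFinset z then (s z:ℝ) else 0)
          + ∑ w ∈ U', (if G.Adj z w then (s z:ℝ) * Y w else 0) := by
      intro z _
      rw [hsum_nbr z Y, hYu, mul_add, Finset.mul_sum]
      congr 1
      · rw [mul_ite, mul_one, mul_zero]
      · exact Finset.sum_congr rfl fun w _ => by rw [mul_ite, mul_zero]
    have h3 : ∑ z ∈ U', (if u ∈ G.neighborFinset z then (s z:ℝ) else 0) = (t:ℝ) := by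
      rw [← Finset.sum_filter, hfilterN, ht]
      push_cast
      rfl
    have h4 : ∑ z ∈ U', ∑ w ∈ U', (if G.Adj z w then (s z:ℝ) * Y w else 0)
        = ∑ w ∈ U', ∑ z ∈ U', (if G.Adj z w then (s z:ℝ) * Y w else 0) := Finset.sum_comm
    have h5 : ∀ w ∈ U', ∑ z ∈ U', (if G.Adj z w then (s z:ℝ) * Y w else 0)
        ≤ (H:ℝ) * ((s w:ℝ) * Y w) := by
      intro w hw
      have hwu : w ≠ u := (Finset.mem_erase.mp hw).1
      have hstep : ∑ z ∈ U', (if G.Adj z w then (s z:ℝ) * Y w else 0)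
          = (∑ z ∈ (G.neighborFinset w).erase u, (s z:ℝ)) * Y w := by
        rw [Finset.sum_mul]
        rw [herase_filter w]
        rw [Finset.sum_filter]
        apply Finset.sum_congr rfl
        intro z _
        by_cases hadj : G.Adj w z
        · rw [if_pos hadj, if_pos hadj.symm]
        · rw [if_neg hadj, if_neg (fun h => hadj h.symm)]
      have hgoal : (H:ℝ) * ((s w:ℝ) * Y w) = ((H:ℝ) * (s w:ℝ)) * Y w := by ring
      rw [hstep, hgoal]
      apply mul_le_mul_of_nonneg_right _ (hY0 w)
      have hcard : ∑ z ∈ (G.neighborFinset w).erase u, (s z:ℝ)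
          ≤ ∑ _z ∈ (G.neighborFinset w).erase u, (H:ℝ) := by
        apply Finset.sum_le_sum
        intro z hz
        have hzU : z ∈ U' :=
          Finset.mem_erase.mpr ⟨(Finset.mem_erase.mp hz).1, Finset.mem_univ z⟩
        exact_mod_cast hsle z hzU
      rw [Finset.sum_const, nsmul_eq_mul] at hcard
      calc ∑ z ∈ (G.neighborFinset w).erase u, (s z:ℝ)
          ≤ ((G.neighborFinset w).erase u).card * (H:ℝ) := hcard
        _ = (H:ℝ) * (s w : ℝ) := by rw [hs]; push_cast; ring
    have h6 : ∑ w ∈ U', ∑ z ∈ U', (if G.Adj z w then (s z:ℝ) * Y w else 0) ≤ (H:ℝ)*T := by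
      rw [hTdef, Finset.mul_sum]
      exact Finset.sum_le_sum h5
    calc ρ*T = ∑ z ∈ U', (s z:ℝ) * (∑ w ∈ G.neighborFinset z, Y w) := h1
      _ = ∑ z ∈ U', ((if u ∈ G.neighborFinset z then (s z:ℝ) else 0)
          + ∑ w ∈ U', (if G.Adj z w then (s z:ℝ) * Y w else 0)) := Finset.sum_congr rfl h2
      _ = (t:ℝ) + ∑ z ∈ U', ∑ w ∈ U', (if G.Adj z w then (s z:ℝ) * Y w else 0) := by
          rw [Finset.sum_add_distrib, h3]
      _ ≤ (t:ℝ) + (H:ℝ)*T := by rw [h4] at *; linarith [h6]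
  exact endgame_arith k r H t t' a m ρ S T hρ0 G1 G2 G3 hT2r hT0 E5 E6 E7 E8 EH hρ2 hra hrk mk1 mk2
end

section
/- Let G be a graph with m ≥ 9 edges. If the adjacency spectral radius ρ(G) > √m, then G contains a 4-cycle. -/
open Finset

private lemma c4_aux {V : Type*} [Fintype V] [DecidableEq V]
    (G : SimpleGraph V) [DecidableRel G.Adj] (u : V)
    (m : ℕ) (hm : m = G.edgeFinset.card)
    (ρ : ℝ) (y : V → ℝ)
    (hyu : y u = 1) (hy0 : ∀ w, 0 ≤ y w) (hy1 : ∀ w, y w ≤ 1)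
    (hAy : ∀ w, ρ * y w ≤ ∑ z ∈ G.neighborFinset w, y z)
    (key : ∀ w z₁ z₂ : V, w ≠ u → G.Adj u z₁ → G.Adj u z₂ →
      G.Adj z₁ w → G.Adj z₂ w → z₁ = z₂) :
    ρ * (∑ w ∈ univ.filter (fun w => w ≠ u ∧ ∃ z, G.Adj u z ∧ G.Adj z w), y w)
      ≤ (∑ w ∈ univ.filter (fun w => w ≠ u ∧ ∃ z, G.Adj u z ∧ G.Adj z w), y w)
        + 2 * ((m:ℝ) - (G.degree u : ℝ)) := by
  set N : Finset V := G.neighborFinset u with hN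
  set S : Finset V := univ.filter (fun w => w ≠ u ∧ ∃ z, G.Adj u z ∧ G.Adj z w) with hS
  -- pair sets
  set E : Finset (V × V) := (S ×ˢ (univ : Finset V)).filter (fun p => G.Adj p.1 p.2) with hE
  set A1 : Finset (V × V) := E.filter (fun p => p.2 = u) with hA1
  set Ec : Finset (V × V) := E.filter (fun p => ¬ p.2 = u) with hEc
  set A2 : Finset (V × V) := Ec.filter (fun p => p.1 ∈ N ∧ p.2 ∈ N) with hA2
  set A3 : Finset (V × V) := Ec.filter (fun p => ¬(p.1 ∈ N ∧ p.2 ∈ N)) with hA3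
  have hmemE : ∀ p : V × V, p ∈ E ↔ (p.1 ∈ S ∧ G.Adj p.1 p.2) := by
    intro p
    rw [hE, Finset.mem_filter, Finset.mem_product]
    constructor
    · rintro ⟨⟨h1, -⟩, h2⟩; exact ⟨h1, h2⟩
    · rintro ⟨h1, h2⟩; exact ⟨⟨h1, mem_univ _⟩, h2⟩
  -- ρ * Sy ≤ ∑ over E of y p.2
  have hP : ρ * (∑ w ∈ S, y w) ≤ ∑ p ∈ E, y p.2 := by
    have hEsum : ∑ p ∈ E, y p.2 = ∑ w ∈ S, ∑ z ∈ G.neighborFinset w, y z := by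
      rw [hE, Finset.sum_filter, Finset.sum_product]
      refine Finset.sum_congr rfl (fun w _ => ?_)
      rw [SimpleGraph.neighborFinset_eq_filter, Finset.sum_filter]
    rw [hEsum, Finset.mul_sum]
    exact Finset.sum_le_sum (fun w _ => hAy w)
  -- split E
  have hsplit : ∑ p ∈ E, y p.2 = (∑ p ∈ A1, y p.2) + (∑ p ∈ A2, y p.2) + (∑ p ∈ A3, y p.2) := by
    have h1 : ∑ p ∈ E, y p.2 = (∑ p ∈ A1, y p.2) + (∑ p ∈ Ec, y p.2) :=
      (Finset.sum_filter_add_sum_filter_not E (fun p => p.2 = u) _).symm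
    have h2 : ∑ p ∈ Ec, y p.2 = (∑ p ∈ A2, y p.2) + (∑ p ∈ A3, y p.2) :=
      (Finset.sum_filter_add_sum_filter_not Ec (fun p => p.1 ∈ N ∧ p.2 ∈ N) _).symm
    rw [h1, h2, add_assoc]
  -- A1 sum
  have hA1sum : ∑ p ∈ A1, y p.2 = (A1.card : ℝ) := by
    rw [Finset.card_eq_sum_ones, Nat.cast_sum]
    refine Finset.sum_congr rfl (fun p hp => ?_)
    have : p.2 = u := (Finset.mem_filter.mp hp).2
    rw [this, hyu]; norm_num
  -- A2 sum
  have hA2sum : ∑ p ∈ A2, y p.2 ≤ ∑ w ∈ S, y w := by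
    have hinj : ∀ p ∈ A2, ∀ q ∈ A2, p.2 = q.2 → p = q := by
      intro p hp q hq hpq
      obtain ⟨hpEc, hp1N, hp2N⟩ := Finset.mem_filter.mp hp
      obtain ⟨hqEc, hq1N, hq2N⟩ := Finset.mem_filter.mp hq
      obtain ⟨hpE, hp2u⟩ := Finset.mem_filter.mp hpEc
      obtain ⟨hqE, hq2u⟩ := Finset.mem_filter.mp hqEc
      have hpadj := (hmemE p).mp hpE
      have hqadj := (hmemE q).mp hqE
      have h1 := key p.2 p.1 q.1 hp2u ((SimpleGraph.mem_neighborFinset _ _ _).mp hp1N)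
        ((SimpleGraph.mem_neighborFinset _ _ _).mp hq1N) hpadj.2 (hpq ▸ hqadj.2)
      exact Prod.ext h1 hpq
    have himg : A2.image Prod.snd ⊆ S := by
      intro z hz
      obtain ⟨p, hp, hpz⟩ := Finset.mem_image.mp hz
      obtain ⟨hpEc, hp1N, hp2N⟩ := Finset.mem_filter.mp hp
      obtain ⟨hpE, hp2u⟩ := Finset.mem_filter.mp hpEc
      have hpadj := (hmemE p).mp hpE
      refine Finset.mem_filter.mpr ⟨mem_univ _, ?_, p.1,
        (SimpleGraph.mem_neighborFinset _ _ _).mp hp1N, hpz ▸ hpadj.2⟩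
      rw [← hpz]; exact hp2u
    calc ∑ p ∈ A2, y p.2 = ∑ z ∈ A2.image Prod.snd, y z := (Finset.sum_image hinj).symm
      _ ≤ ∑ w ∈ S, y w := Finset.sum_le_sum_of_subset_of_nonneg himg (fun w _ _ => hy0 w)
  -- A3 sum
  have hA3sum : ∑ p ∈ A3, y p.2 ≤ (A3.card : ℝ) := by
    rw [Finset.card_eq_sum_ones, Nat.cast_sum]
    refine Finset.sum_le_sum (fun p _ => by simpa using hy1 p.2)
  -- cardinality bound : A1.card + A3.card + 2 * deg u ≤ 2 * m
  have hcard : A1.card + A3.card + 2 * G.degree u ≤ 2 * m := by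
    classical
    set AP : Finset (V × V) := univ.filter (fun p => G.Adj p.1 p.2) with hAP
    set B : Finset (V × V) := univ.filter (fun p => G.Adj p.1 p.2 ∧ p.1 ≠ u ∧ p.2 ≠ u) with hB
    set T2 : Finset (V × V) := univ.filter (fun p => G.Adj p.1 p.2 ∧ p.1 ∈ N ∧ p.2 ∈ N) with hT2
    set C1 : Finset (V × V) := univ.filter (fun p => G.Adj p.1 p.2 ∧ p.1 = u) with hC1
    set C2 : Finset (V × V) := univ.filter (fun p => G.Adj p.1 p.2 ∧ p.2 = u) with hC2
    have hAPcard : AP.card = 2 * m := by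
      have h1 : AP.card = ∑ v : V, (G.neighborFinset v).card := by
        rw [hAP, Finset.card_filter, ← Finset.univ_product_univ, Finset.sum_product]
        refine Finset.sum_congr rfl (fun v _ => ?_)
        rw [SimpleGraph.neighborFinset_eq_filter, Finset.card_filter]
      rw [h1]
      rw [hm]
      exact G.sum_degrees_eq_twice_card_edges
    have hC1card : C1.card = G.degree u := by
      rw [← SimpleGraph.card_neighborFinset_eq_degree]
      refine Finset.card_bij' (fun p _ => p.2) (fun z hz => (u, z)) ?_ ?_ ?_ ?_
      · intro p hp
        obtain ⟨-, hadj, h1⟩ := Finset.mem_filter.mp hp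
        rw [SimpleGraph.mem_neighborFinset]
        exact h1 ▸ hadj
      · intro z hz
        exact Finset.mem_filter.mpr ⟨mem_univ _, (SimpleGraph.mem_neighborFinset _ _ _).mp hz, rfl⟩
      · intro p hp
        obtain ⟨-, hadj, h1⟩ := Finset.mem_filter.mp hp
        exact Prod.ext h1.symm rfl
      · intro z hz
        rfl
    have hC2card : C2.card = G.degree u := by
      rw [← SimpleGraph.card_neighborFinset_eq_degree]
      refine Finset.card_bij' (fun p _ => p.1) (fun z hz => (z, u)) ?_ ?_ ?_ ?_
      · intro p hp
        obtain ⟨-, hadj, h1⟩ := Finset.mem_filter.mp hp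
        rw [SimpleGraph.mem_neighborFinset]
        exact (h1 ▸ hadj).symm
      · intro z hz
        exact Finset.mem_filter.mpr ⟨mem_univ _,
          ((SimpleGraph.mem_neighborFinset _ _ _).mp hz).symm, rfl⟩
      · intro p hp
        obtain ⟨-, hadj, h1⟩ := Finset.mem_filter.mp hp
        exact Prod.ext rfl h1.symm
      · intro z hz
        rfl
    -- A1 injects into T2
    have hA1T2 : A1.card ≤ T2.card := by
      set g : V → V := fun w => if h : ∃ z, G.Adj u z ∧ G.Adj z w then h.choose else w with hg
      refine Finset.card_le_card_of_injOn (fun p => (p.1, g p.1)) ?_ ?_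
      · intro p hp
        obtain ⟨hpE, hp2u⟩ := Finset.mem_filter.mp hp
        obtain ⟨hpS, hpadj⟩ := (hmemE p).mp hpE
        obtain ⟨-, hpu, hex⟩ := Finset.mem_filter.mp hpS
        have hgspec : G.Adj u (g p.1) ∧ G.Adj (g p.1) p.1 := by
          rw [hg]; simp only [hex, dif_pos]
          exact hex.choose_spec
        refine Finset.mem_filter.mpr ⟨mem_univ _, hgspec.2.symm, ?_, ?_⟩
        · rw [SimpleGraph.mem_neighborFinset]
          exact (hp2u ▸ hpadj : G.Adj p.1 u).symm
        · rw [SimpleGraph.mem_neighborFinset]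
          exact hgspec.1
      · intro p hp q hq hpq
        obtain ⟨-, hp2u⟩ := Finset.mem_filter.mp hp
        obtain ⟨-, hq2u⟩ := Finset.mem_filter.mp hq
        have h1 : p.1 = q.1 := by simpa using congrArg Prod.fst hpq
        exact Prod.ext h1 (hp2u.trans hq2u.symm)
    -- T2 and A3 are disjoint subsets of B
    have hT2B : T2 ⊆ B := by
      intro p hp
      obtain ⟨-, hadj, h1, h2⟩ := Finset.mem_filter.mp hp
      refine Finset.mem_filter.mpr ⟨mem_univ _, hadj, ?_, ?_⟩
      · exact ((SimpleGraph.mem_neighborFinset _ _ _).mp h1).ne'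
      · exact ((SimpleGraph.mem_neighborFinset _ _ _).mp h2).ne'
    have hA3B : A3 ⊆ B := by
      intro p hp
      obtain ⟨hpEc, hnotN⟩ := Finset.mem_filter.mp hp
      obtain ⟨hpE, hp2u⟩ := Finset.mem_filter.mp hpEc
      obtain ⟨hpS, hpadj⟩ := (hmemE p).mp hpE
      obtain ⟨-, hpu, -⟩ := Finset.mem_filter.mp hpS
      exact Finset.mem_filter.mpr ⟨mem_univ _, hpadj, hpu, hp2u⟩
    have hdisjT2A3 : Disjoint T2 A3 := by
      rw [Finset.disjoint_left]
      intro p hp hp3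
      obtain ⟨-, -, hN2⟩ := Finset.mem_filter.mp hp
      exact (Finset.mem_filter.mp hp3).2 hN2
    have hT2A3 : T2.card + A3.card ≤ B.card := by
      rw [← Finset.card_union_of_disjoint hdisjT2A3]
      exact Finset.card_le_card (Finset.union_subset hT2B hA3B)
    -- B, C1, C2 disjoint subsets of AP
    have hdisjBC1 : Disjoint B C1 := by
      rw [Finset.disjoint_left]
      intro p hp hp1
      exact (Finset.mem_filter.mp hp).2.2.1 (Finset.mem_filter.mp hp1).2.2
    have hdisjBC2 : Disjoint (B ∪ C1) C2 := by
      rw [Finset.disjoint_left]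
      intro p hp hp2
      have h2 := (Finset.mem_filter.mp hp2).2
      rcases Finset.mem_union.mp hp with h | h
      · exact (Finset.mem_filter.mp h).2.2.2 h2.2
      · have h1 := (Finset.mem_filter.mp h).2
        have hadj := h1.1
        rw [h1.2, h2.2] at hadj
        exact G.loopless.irrefl u hadj
    have hunion : B.card + C1.card + C2.card ≤ AP.card := by
      rw [← Finset.card_union_of_disjoint hdisjBC1, ← Finset.card_union_of_disjoint hdisjBC2]
      refine Finset.card_le_card ?_
      intro p hp
      rcases Finset.mem_union.mp hp with h | h
      · rcases Finset.mem_union.mp h with h' | h'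
        · exact Finset.mem_filter.mpr ⟨mem_univ _, (Finset.mem_filter.mp h').2.1⟩
        · exact Finset.mem_filter.mpr ⟨mem_univ _, (Finset.mem_filter.mp h').2.1⟩
      · exact Finset.mem_filter.mpr ⟨mem_univ _, (Finset.mem_filter.mp h).2.1⟩
    omega
  -- assemble
  have hcast : (A1.card : ℝ) + (A3.card : ℝ) ≤ 2 * ((m:ℝ) - (G.degree u : ℝ)) := by
    have h : ((A1.card : ℝ)) + A3.card + 2 * (G.degree u : ℝ) ≤ 2 * (m:ℝ) := by
      exact_mod_cast hcard
    linarith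
  calc ρ * (∑ w ∈ S, y w) ≤ ∑ p ∈ E, y p.2 := hP
    _ = (∑ p ∈ A1, y p.2) + (∑ p ∈ A2, y p.2) + (∑ p ∈ A3, y p.2) := hsplit
    _ ≤ (A1.card : ℝ) + (∑ w ∈ S, y w) + (A3.card : ℝ) := by
        rw [hA1sum]; gcongr
    _ ≤ (∑ w ∈ S, y w) + 2 * ((m:ℝ) - (G.degree u : ℝ)) := by linarith


theorem c4_of_spectral_radius_gt_sqrt_m {V : Type*} [Fintype V] [DecidableEq V]
    (G : SimpleGraph V) [DecidableRel G.Adj]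
    (m : ℕ) (hm : m = G.edgeFinset.card) (hm9 : 9 ≤ m)
    (ρ : ℝ) (x : V → ℝ) (hx0 : x ≠ 0) (hx : (G.adjMatrix ℝ).mulVec x = ρ • x)
    (hlargest : ∀ (μ : ℝ) (y : V → ℝ), y ≠ 0 → (G.adjMatrix ℝ).mulVec y = μ • y → μ ≤ ρ)
    (hρ : Real.sqrt (m : ℝ) < ρ) :
    ∃ a b c d : V, a ≠ b ∧ a ≠ c ∧ a ≠ d ∧ b ≠ c ∧ b ≠ d ∧ c ≠ d ∧
      G.Adj a b ∧ G.Adj b c ∧ G.Adj c d ∧ G.Adj d a := by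
  by_contra hcon
  -- basic facts about ρ
  have h93 : Real.sqrt 9 = 3 := by
    rw [show (9:ℝ) = 3^2 by norm_num, Real.sqrt_sq (by norm_num)]
  have hρ3 : (3:ℝ) < ρ := by
    refine lt_of_le_of_lt ?_ hρ
    rw [← h93]
    exact Real.sqrt_le_sqrt (by exact_mod_cast hm9)
  have hρ0 : (0:ℝ) ≤ ρ := by linarith
  -- the maximizing vertex u
  obtain ⟨v0, hv0⟩ := Function.ne_iff.mp hx0
  obtain ⟨u, -, hu⟩ := Finset.exists_max_image Finset.univ (fun w => |x w|) ⟨v0, mem_univ v0⟩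
  have hxu : 0 < |x u| := lt_of_lt_of_le (abs_pos.mpr hv0) (hu v0 (mem_univ _))
  set y : V → ℝ := fun w => |x w| / |x u| with hy
  have hyu : y u = 1 := div_self (ne_of_gt hxu)
  have hy0 : ∀ w, 0 ≤ y w := fun w => div_nonneg (abs_nonneg _) hxu.le
  have hy1 : ∀ w, y w ≤ 1 := fun w => div_le_one_of_le₀ (hu w (mem_univ _)) hxu.le
  -- subharmonicity of y
  have hAy : ∀ w, ρ * y w ≤ ∑ z ∈ G.neighborFinset w, y z := by
    intro w
    have h1 : ∑ z ∈ G.neighborFinset w, x z = ρ * x w := by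
      have := congrFun hx w
      rwa [SimpleGraph.adjMatrix_mulVec_apply] at this
    have h2 : ρ * |x w| ≤ ∑ z ∈ G.neighborFinset w, |x z| := by
      calc ρ * |x w| = |ρ * x w| := by rw [abs_mul, abs_of_nonneg hρ0]
        _ = |∑ z ∈ G.neighborFinset w, x z| := by rw [h1]
        _ ≤ ∑ z ∈ G.neighborFinset w, |x z| := Finset.abs_sum_le_sum_abs _ _
    have h3 : (ρ * |x w|) / |x u| ≤ (∑ z ∈ G.neighborFinset w, |x z|) / |x u| := by
      gcongr
    calc ρ * y w = (ρ * |x w|) / |x u| := by rw [hy]; ring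
      _ ≤ (∑ z ∈ G.neighborFinset w, |x z|) / |x u| := h3
      _ = ∑ z ∈ G.neighborFinset w, y z := by rw [Finset.sum_div]
  -- the C4-free key lemma at u
  have key : ∀ w z₁ z₂ : V, w ≠ u → G.Adj u z₁ → G.Adj u z₂ →
      G.Adj z₁ w → G.Adj z₂ w → z₁ = z₂ := by
    intro w z₁ z₂ hw h1 h2 h3 h4
    by_contra hne
    exact hcon ⟨u, z₁, w, z₂, h1.ne, Ne.symm hw, h2.ne, h3.ne, hne, h4.ne', h1, h3,
      h4.symm, h2.symm⟩
  set N : Finset V := G.neighborFinset u with hN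
  set S : Finset V := univ.filter (fun w => w ≠ u ∧ ∃ z, G.Adj u z ∧ G.Adj z w) with hS
  set Sy : ℝ := ∑ w ∈ S, y w with hSydef
  have hSy0 : 0 ≤ Sy := Finset.sum_nonneg (fun w _ => hy0 w)
  -- Step A : ρ^2 ≤ deg u + Sy
  have hA : ρ * ρ ≤ (G.degree u : ℝ) + Sy := by
    have hDD : ∑ v ∈ N, ∑ w ∈ (G.neighborFinset v).erase u, y w ≤ Sy := by
      have heq : ∑ v ∈ N, ∑ w ∈ (G.neighborFinset v).erase u, y w
          = ∑ w ∈ univ, ∑ v ∈ N, (if w ∈ (G.neighborFinset v).erase u then y w else 0) := by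
        rw [Finset.sum_comm]
        refine Finset.sum_congr rfl (fun v _ => ?_)
        rw [Finset.sum_ite_mem, Finset.univ_inter]
      rw [heq, hSydef]
      have : ∀ w ∈ univ, (∑ v ∈ N, (if w ∈ (G.neighborFinset v).erase u then y w else 0))
          ≤ (if w ∈ S then y w else 0) := by
        intro w _
        have hform : ∑ v ∈ N, (if w ∈ (G.neighborFinset v).erase u then y w else 0)
            = ((N.filter (fun v => w ∈ (G.neighborFinset v).erase u)).card : ℝ) * y w := by
          rw [Finset.sum_ite, Finset.sum_const_zero, add_zero, Finset.sum_const,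
            nsmul_eq_mul]
        rw [hform]
        by_cases hwS : w ∈ S
        · rw [if_pos hwS]
          have hwu : w ≠ u := (Finset.mem_filter.mp hwS).2.1
          have hc : (N.filter (fun v => w ∈ (G.neighborFinset v).erase u)).card ≤ 1 := by
            refine Finset.card_le_one.mpr (fun v₁ hv₁ v₂ hv₂ => ?_)
            obtain ⟨hv₁N, hv₁w⟩ := Finset.mem_filter.mp hv₁
            obtain ⟨hv₂N, hv₂w⟩ := Finset.mem_filter.mp hv₂
            have h1 := (SimpleGraph.mem_neighborFinset _ _ _).mp hv₁N
            have h2 := (SimpleGraph.mem_neighborFinset _ _ _).mp hv₂N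
            have h3 := (SimpleGraph.mem_neighborFinset _ _ _).mp (Finset.mem_of_mem_erase hv₁w)
            have h4 := (SimpleGraph.mem_neighborFinset _ _ _).mp (Finset.mem_of_mem_erase hv₂w)
            exact key w v₁ v₂ hwu h1 h2 h3 h4
          calc ((N.filter (fun v => w ∈ (G.neighborFinset v).erase u)).card : ℝ) * y w
              ≤ 1 * y w := by
                apply mul_le_mul_of_nonneg_right _ (hy0 w)
                exact_mod_cast hc
            _ = y w := one_mul _
        · rw [if_neg hwS]
          have hc : (N.filter (fun v => w ∈ (G.neighborFinset v).erase u)) = ∅ := by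
            refine Finset.filter_eq_empty_iff.mpr (fun v hv hvw => ?_)
            refine hwS (Finset.mem_filter.mpr ⟨mem_univ _, Finset.ne_of_mem_erase hvw, v,
              (SimpleGraph.mem_neighborFinset _ _ _).mp hv,
              (SimpleGraph.mem_neighborFinset _ _ _).mp (Finset.mem_of_mem_erase hvw)⟩)
          rw [hc]
          simp
      calc ∑ w ∈ univ, ∑ v ∈ N, (if w ∈ (G.neighborFinset v).erase u then y w else 0)
          ≤ ∑ w ∈ univ, (if w ∈ S then y w else 0) := Finset.sum_le_sum this
        _ = ∑ w ∈ S, y w := by rw [Finset.sum_ite_mem, Finset.univ_inter]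
    calc ρ * ρ = ρ * (ρ * y u) := by rw [hyu]; ring
      _ ≤ ρ * (∑ v ∈ N, y v) := mul_le_mul_of_nonneg_left (hAy u) hρ0
      _ = ∑ v ∈ N, ρ * y v := Finset.mul_sum _ _ _
      _ ≤ ∑ v ∈ N, ∑ w ∈ G.neighborFinset v, y w := Finset.sum_le_sum (fun v _ => hAy v)
      _ = ∑ v ∈ N, (y u + ∑ w ∈ (G.neighborFinset v).erase u, y w) := by
          refine Finset.sum_congr rfl (fun v hv => ?_)
          have hu' : u ∈ G.neighborFinset v := by
            rw [SimpleGraph.mem_neighborFinset]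
            exact ((SimpleGraph.mem_neighborFinset _ _ _).mp hv).symm
          exact (Finset.add_sum_erase _ _ hu').symm
      _ = (G.degree u : ℝ) + ∑ v ∈ N, ∑ w ∈ (G.neighborFinset v).erase u, y w := by
          rw [Finset.sum_add_distrib, Finset.sum_const, hyu, nsmul_eq_mul, mul_one]
          rfl
      _ ≤ (G.degree u : ℝ) + Sy := by linarith
  -- (i)
  have hSd : (m:ℝ) - (G.degree u : ℝ) < Sy := by
    have hmρ : (m:ℝ) < ρ * ρ := by
      have := Real.mul_self_sqrt (show (0:ℝ) ≤ (m:ℝ) by positivity)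
      nlinarith [Real.sqrt_nonneg (m:ℝ)]
    linarith
  -- Step B : ρ * Sy ≤ Sy + 2 * (m - deg u)
  have hB : ρ * Sy ≤ Sy + 2 * ((m:ℝ) - (G.degree u : ℝ)) :=
    c4_aux G u m hm ρ y hyu hy0 hy1 hAy key
  nlinarith [mul_le_mul_of_nonneg_right hρ3.le hSy0]
end

section
/- Let G be a graph without isolated vertices with m ≥ 4 edges. Then the signless Laplacian spectral radius q(G) satisfies q(G) ≤ m + 1, with equality if and only if G is the star K_{1,m}. -/
open Finset SimpleGraph

section aux
variable {V : Type*} [Fintype V] [DecidableEq V] (G : SimpleGraph V) [DecidableRel G.Adj]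

lemma slq_inc_subset (u : V) : G.incidenceFinset u ⊆ G.edgeFinset := by
  intro e he
  rw [mem_incidenceFinset] at he
  exact mem_edgeFinset.mpr he.1

lemma slq_deg_le (u : V) : G.degree u ≤ G.edgeFinset.card := by
  rw [← card_incidenceFinset_eq_degree]
  exact card_le_card (slq_inc_subset G u)

lemma slq_inter {u v : V} (h : G.Adj u v) :
    G.incidenceFinset u ∩ G.incidenceFinset v = {s(u, v)} := by
  ext e
  simp only [Finset.mem_inter, mem_incidenceFinset, Finset.mem_singleton]
  constructor
  · intro ⟨h1, h2⟩
    have := G.incidenceSet_inter_incidenceSet_of_adj h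
    have : e ∈ ({s(u,v)} : Set (Sym2 V)) := this ▸ Set.mem_inter h1 h2
    simpa using this
  · rintro rfl
    exact ⟨G.mk'_mem_incidenceSet_left_iff.2 h, G.mk'_mem_incidenceSet_right_iff.2 h⟩

lemma slq_pair {u v : V} (h : G.Adj u v) :
    G.degree u + G.degree v ≤ G.edgeFinset.card + 1 ∧
    (G.degree u + G.degree v = G.edgeFinset.card + 1 →
      ∀ a b : V, G.Adj a b → a = u ∨ b = u ∨ a = v ∨ b = v) := by
  have hcard : (G.incidenceFinset u ∪ G.incidenceFinset v).card + 1
      = G.degree u + G.degree v := by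
    rw [← card_incidenceFinset_eq_degree, ← card_incidenceFinset_eq_degree,
      ← Finset.card_union_add_card_inter, slq_inter G h, Finset.card_singleton]
  have hsub : G.incidenceFinset u ∪ G.incidenceFinset v ⊆ G.edgeFinset :=
    Finset.union_subset (slq_inc_subset G u) (slq_inc_subset G v)
  constructor
  · have := card_le_card hsub
    omega
  · intro heq a b hab
    have hcc : (G.incidenceFinset u ∪ G.incidenceFinset v).card = G.edgeFinset.card := by omega
    have hueq : G.incidenceFinset u ∪ G.incidenceFinset v = G.edgeFinset :=
      Finset.eq_of_subset_of_card_le hsub hcc.ge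
    have hmem : s(a, b) ∈ G.incidenceFinset u ∪ G.incidenceFinset v := by
      rw [hueq]; exact mem_edgeFinset.mpr hab
    rcases Finset.mem_union.mp hmem with hm | hm <;>
      rw [mem_incidenceFinset] at hm
    · rcases Sym2.mem_iff.mp hm.2 with h' | h'
      · exact Or.inl h'.symm
      · exact Or.inr (Or.inl h'.symm)
    · rcases Sym2.mem_iff.mp hm.2 with h' | h'
      · exact Or.inr (Or.inr (Or.inl h'.symm))
      · exact Or.inr (Or.inr (Or.inr h'.symm))

lemma slq_core (hiso : ∀ v : V, 0 < G.degree v)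
    (m : ℕ) (hm : m = G.edgeFinset.card) (hm4 : 4 ≤ m)
    (q : ℝ) (x : V → ℝ)
    (heq : ∀ a : V, q * x a = (G.degree a : ℝ) * x a + ∑ w ∈ G.neighborFinset a, x w)
    (u : V) (hu : ∀ v, |x v| ≤ x u) (hupos : 0 < x u) :
    q ≤ (m : ℝ) + 1 ∧
      (q = (m : ℝ) + 1 → ∃ c : V, ∀ a b : V, G.Adj a b → a = c ∨ b = c) := by
  set M := x u with hM
  have hxleM : ∀ v, x v ≤ M := fun v => le_trans (le_abs_self _) (hu v)
  have hNu : (G.neighborFinset u).Nonempty := by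
    rw [← Finset.card_pos, G.card_neighborFinset_eq_degree]
    exact hiso u
  obtain ⟨v, hvmem, hvmax⟩ := Finset.exists_max_image (G.neighborFinset u) x hNu
  have hadj : G.Adj u v := by rwa [SimpleGraph.mem_neighborFinset] at hvmem
  have hsumu : ∑ w ∈ G.neighborFinset u, x w ≤ (G.degree u : ℝ) * x v := by
    have := Finset.sum_le_card_nsmul (G.neighborFinset u) x (x v) hvmax
    rwa [G.card_neighborFinset_eq_degree, nsmul_eq_mul] at this
  have hduR : (G.degree u : ℝ) ≤ m := by exact_mod_cast hm ▸ slq_deg_le G u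
  have hdu0 : (0:ℝ) ≤ (G.degree u : ℝ) := Nat.cast_nonneg _
  have hdv0 : (0:ℝ) ≤ (G.degree v : ℝ) := Nat.cast_nonneg _
  have hmR : (4:ℝ) ≤ (m:ℝ) := by exact_mod_cast hm4
  by_cases hxv : x v ≤ 0
  · have h1 := heq u
    have h2 : (G.degree u : ℝ) * x v ≤ 0 := mul_nonpos_of_nonneg_of_nonpos hdu0 hxv
    have hq : q ≤ (G.degree u : ℝ) := by
      have : q * M ≤ (G.degree u : ℝ) * M := by linarith
      exact le_of_mul_le_mul_right this hupos
    constructor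
    · linarith
    · intro hqeq; exfalso; linarith
  · push_neg at hxv
    have hMxv : 0 < M + x v := by linarith
    have hsumv : ∑ w ∈ G.neighborFinset v, x w ≤ (G.degree v : ℝ) * M := by
      have := Finset.sum_le_card_nsmul (G.neighborFinset v) x M (fun w _ => hxleM w)
      rwa [G.card_neighborFinset_eq_degree, nsmul_eq_mul] at this
    have e1 := heq u
    have e2 := heq v
    have hdvxv : (G.degree v : ℝ) * x v ≤ (G.degree v : ℝ) * M :=
      mul_le_mul_of_nonneg_left (hxleM v) hdv0
    have hpair := slq_pair G hadj
    have hpairR : (G.degree u : ℝ) + (G.degree v : ℝ) ≤ (m:ℝ) + 1 := by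
      have := hpair.1
      rw [← hm] at this
      exact_mod_cast this
    have hq_le : q ≤ (G.degree u : ℝ) + (G.degree v : ℝ) := by
      have hsum : q * (M + x v) ≤ ((G.degree u : ℝ) + (G.degree v : ℝ)) * (M + x v) := by
        linarith [e1, e2, hsumu, hsumv, hdvxv]
      exact le_of_mul_le_mul_right hsum hMxv
    refine ⟨by linarith, ?_⟩
    intro hqeq
    have hddR : (G.degree u : ℝ) + (G.degree v : ℝ) = (m:ℝ) + 1 := by
      rw [hqeq] at hq_le; linarith
    have hdd : G.degree u + G.degree v = G.edgeFinset.card + 1 := by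
      rw [← hm]; exact_mod_cast hddR
    have hcover := hpair.2 hdd
    -- tightness
    have h3 : ((G.degree u : ℝ) + (G.degree v : ℝ)) * M = ((m:ℝ)+1) * M := by rw [hddR]
    have h4 : ((G.degree u : ℝ) + (G.degree v : ℝ)) * (x v) = ((m:ℝ)+1) * (x v) := by rw [hddR]
    rw [hqeq] at e1 e2
    have hT1 : ∑ w ∈ G.neighborFinset u, x w = (G.degree u : ℝ) * x v := by
      linarith [e1, e2, hsumu, hsumv, h3, h4]
    have hT2 : ∑ w ∈ G.neighborFinset v, x w = (G.degree v : ℝ) * M := by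
      linarith [e1, e2, hsumu, hsumv, h3, h4]
    have hallu : ∀ w ∈ G.neighborFinset u, x w = x v := by
      intro w hw
      by_contra hne
      have hlt : ∑ z ∈ G.neighborFinset u, x z
          < ∑ z ∈ G.neighborFinset u, (fun _ => x v) z :=
        Finset.sum_lt_sum hvmax ⟨w, hw, lt_of_le_of_ne (hvmax w hw) hne⟩
      rw [Finset.sum_const, G.card_neighborFinset_eq_degree, nsmul_eq_mul, hT1] at hlt
      exact lt_irrefl _ hlt
    have hallv : ∀ w ∈ G.neighborFinset v, x w = M := by
      intro w hw
      by_contra hne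
      have hlt : ∑ z ∈ G.neighborFinset v, x z
          < ∑ z ∈ G.neighborFinset v, (fun _ => M) z :=
        Finset.sum_lt_sum (fun z _ => hxleM z) ⟨w, hw, lt_of_le_of_ne (hxleM w) hne⟩
      rw [Finset.sum_const, G.card_neighborFinset_eq_degree, nsmul_eq_mul, hT2] at hlt
      exact lt_irrefl _ hlt
    have hq5 : (5:ℝ) ≤ q := by rw [hqeq]; linarith
    have key_w : ∀ w : V, w ≠ u → w ≠ v → x w = M → False := by
      intro w hwu hwv hxw
      have hsub : G.neighborFinset w ⊆ {u, v} := by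
        intro z hz
        rcases hcover w z (by rwa [SimpleGraph.mem_neighborFinset] at hz) with h' | h' | h' | h'
        · exact absurd h' hwu
        · simp [h']
        · exact absurd h' hwv
        · simp [h']
      have hdw : (G.degree w : ℝ) ≤ 2 := by
        have := card_le_card hsub
        rw [G.card_neighborFinset_eq_degree] at this
        have h2 : ({u, v} : Finset V).card ≤ 2 := Finset.card_insert_le _ _ |>.trans (by simp)
        exact_mod_cast this.trans h2
      have hsw : ∑ z ∈ G.neighborFinset w, x z ≤ (G.degree w : ℝ) * M := by
        have := Finset.sum_le_card_nsmul (G.neighborFinset w) x M (fun z _ => hxleM z)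
        rwa [G.card_neighborFinset_eq_degree, nsmul_eq_mul] at this
      have ew := heq w
      rw [hxw, hqeq] at ew
      have h6 : (G.degree w : ℝ) * M ≤ 2 * M := mul_le_mul_of_nonneg_right hdw hupos.le
      have h7 : 4 * M ≤ (m:ℝ) * M := mul_le_mul_of_nonneg_right hmR hupos.le
      linarith
    by_cases hvM : x v = M
    · exfalso
      by_cases hdu2 : 2 ≤ G.degree u
      · have hlt1 : 1 < (G.neighborFinset u).card := by
          rw [G.card_neighborFinset_eq_degree]; omega
        obtain ⟨w, hw, hwv⟩ := Finset.exists_mem_ne hlt1 v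
        have hwu : w ≠ u := by
          intro h'; rw [h'] at hw; exact G.notMem_neighborFinset_self u hw
        exact key_w w hwu hwv (by rw [hallu w hw, hvM])
      · have hdv2 : 2 ≤ G.degree v := by omega
        have hlt1 : 1 < (G.neighborFinset v).card := by
          rw [G.card_neighborFinset_eq_degree]; omega
        obtain ⟨w, hw, hwu⟩ := Finset.exists_mem_ne hlt1 u
        have hwv : w ≠ v := by
          intro h'; rw [h'] at hw; exact G.notMem_neighborFinset_self v hw
        exact key_w w hwu hwv (hallv w hw)
    · have hvltM : x v < M := lt_of_le_of_ne (hxleM v) hvM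
      have hNv : ∀ w ∈ G.neighborFinset v, w = u := by
        intro w hw
        by_contra hwu
        have hxwM : x w = M := hallv w hw
        have hwv : w ≠ v := by
          intro h'; rw [h'] at hw; exact G.notMem_neighborFinset_self v hw
        have hwnu : w ∉ G.neighborFinset u := by
          intro h'
          have := hallu w h'
          rw [hxwM] at this
          exact hvM this.symm
        have hNw : G.neighborFinset w = {v} := by
          ext z
          simp only [SimpleGraph.mem_neighborFinset, Finset.mem_singleton]
          constructor
          · intro hz
            rcases hcover w z hz with h' | h' | h' | h'
            · exact absurd h' hwu
            · exfalso; apply hwnu; rw [SimpleGraph.mem_neighborFinset]; rw [h'] at hz; exact hz.symm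
            · exact absurd h' hwv
            · exact h'
          · intro h'
            rw [SimpleGraph.mem_neighborFinset] at hw
            rw [h']
            exact hw.symm
        have hdw : (G.degree w : ℝ) = 1 := by
          rw [← G.card_neighborFinset_eq_degree, hNw]
          simp
        have ew := heq w
        rw [hNw, Finset.sum_singleton, hdw, hxwM, hqeq] at ew
        have h7 : 4 * M ≤ (m:ℝ) * M := mul_le_mul_of_nonneg_right hmR hupos.le
        linarith [hxleM v]
      refine ⟨u, fun a b hab => ?_⟩
      rcases hcover a b hab with h' | h' | h' | h'
      · exact Or.inl h'
      · exact Or.inr h'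
      · subst h'
        exact Or.inr (hNv b (by rw [SimpleGraph.mem_neighborFinset]; exact hab))
      · subst h'
        exact Or.inl (hNv a (by rw [SimpleGraph.mem_neighborFinset]; exact hab.symm))

lemma slq_mulVec (y : V → ℝ) (a : V) :
    ((G.adjMatrix ℝ + Matrix.diagonal fun v => (G.degree v : ℝ)).mulVec y) a
      = (G.degree a : ℝ) * y a + ∑ w ∈ G.neighborFinset a, y w := by
  rw [Matrix.add_mulVec, Pi.add_apply, Matrix.mulVec_diagonal,
    SimpleGraph.adjMatrix_mulVec_apply, add_comm]

end aux

theorem signless_laplacian_radius_le_m_add_one {V : Type*} [Fintype V] [DecidableEq V]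
    (G : SimpleGraph V) [DecidableRel G.Adj]
    (hiso : ∀ v : V, 0 < G.degree v)
    (m : ℕ) (hm : m = G.edgeFinset.card) (hm4 : 4 ≤ m)
    (q : ℝ) (x : V → ℝ) (hx0 : x ≠ 0)
    (hx : (G.adjMatrix ℝ + Matrix.diagonal fun v => (G.degree v : ℝ)).mulVec x = q • x)
    (hlargest : ∀ (μ : ℝ) (y : V → ℝ), y ≠ 0 →
      (G.adjMatrix ℝ + Matrix.diagonal fun v => (G.degree v : ℝ)).mulVec y = μ • y → μ ≤ q) :
    q ≤ (m : ℝ) + 1 ∧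
      (q = (m : ℝ) + 1 ↔ ∃ c : V, ∀ u v : V, G.Adj u v → u = c ∨ v = c) := by
  have heq : ∀ a : V, q * x a = (G.degree a : ℝ) * x a + ∑ w ∈ G.neighborFinset a, x w := by
    intro a
    have := congrFun hx a
    rw [slq_mulVec, Pi.smul_apply, smul_eq_mul] at this
    exact this.symm
  obtain ⟨v0, hv0⟩ := Function.ne_iff.mp hx0
  rw [Pi.zero_apply] at hv0
  haveI : Nonempty V := ⟨v0⟩
  obtain ⟨u0, -, hu0⟩ := Finset.exists_max_image Finset.univ (fun v => |x v|) Finset.univ_nonempty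
  have hu0' : ∀ v, |x v| ≤ |x u0| := fun v => hu0 v (Finset.mem_univ v)
  have hMpos : 0 < |x u0| := lt_of_lt_of_le (abs_pos.mpr hv0) (hu0' v0)
  have hcore : q ≤ (m : ℝ) + 1 ∧
      (q = (m : ℝ) + 1 → ∃ c : V, ∀ a b : V, G.Adj a b → a = c ∨ b = c) := by
    by_cases hpos : 0 ≤ x u0
    · have habs : |x u0| = x u0 := abs_of_nonneg hpos
      exact slq_core G hiso m hm hm4 q x heq u0 (fun v => habs ▸ hu0' v) (habs ▸ hMpos)
    · push_neg at hpos
      have heq' : ∀ a : V, q * (-x) a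
          = (G.degree a : ℝ) * (-x) a + ∑ w ∈ G.neighborFinset a, (-x) w := by
        intro a
        have := heq a
        simp only [Pi.neg_apply, Finset.sum_neg_distrib]
        ring_nf
        linarith
      have habs : |x u0| = -(x u0) := abs_of_neg hpos
      have hu' : ∀ v, |(-x) v| ≤ (-x) u0 := by
        intro v
        simp only [Pi.neg_apply, abs_neg]
        rw [← habs] at *
        exact hu0' v
      exact slq_core G hiso m hm hm4 q (-x) heq' u0 hu'
        (by simp only [Pi.neg_apply]; linarith)
  refine ⟨hcore.1, hcore.2, ?_⟩
  rintro ⟨c, hc⟩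
  set y : V → ℝ := fun v => if v = c then (m:ℝ) else 1 with hy
  have hinc : G.incidenceFinset c = G.edgeFinset := by
    apply Finset.Subset.antisymm (slq_inc_subset G c)
    intro e he
    rw [SimpleGraph.mem_edgeFinset] at he
    rw [SimpleGraph.mem_incidenceFinset]
    refine ⟨he, ?_⟩
    revert he
    refine Sym2.ind (fun a b he => ?_) e
    rw [SimpleGraph.mem_edgeSet] at he
    rcases hc a b he with h' | h'
    · exact h' ▸ Sym2.mem_mk_left a b
    · exact h' ▸ Sym2.mem_mk_right a b
  have hdc : G.degree c = m := by
    rw [← SimpleGraph.card_incidenceFinset_eq_degree, hinc, hm]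
  have hleafN : ∀ v, v ≠ c → G.neighborFinset v = {c} := by
    intro v hv
    obtain ⟨w, hw⟩ := (G.degree_pos_iff_exists_adj v).mp (hiso v)
    have hwc : w = c := (hc v w hw).resolve_left hv
    ext z
    simp only [SimpleGraph.mem_neighborFinset, Finset.mem_singleton]
    constructor
    · intro hz
      exact (hc v z hz).resolve_left hv
    · rintro rfl
      rw [← hwc]
      exact hw
  have heigy : (G.adjMatrix ℝ + Matrix.diagonal fun v => (G.degree v : ℝ)).mulVec y
      = ((m:ℝ) + 1) • y := by
    funext a
    rw [slq_mulVec, Pi.smul_apply, smul_eq_mul]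
    by_cases ha : a = c
    · subst ha
      have h1 : ∀ w ∈ G.neighborFinset a, y w = 1 := by
        intro w hw
        rw [SimpleGraph.mem_neighborFinset] at hw
        have : w ≠ a := fun h => (h ▸ hw).ne rfl
        simp [hy, this]
      rw [Finset.sum_congr rfl h1, Finset.sum_const, G.card_neighborFinset_eq_degree, hdc]
      simp only [hy, if_pos rfl, nsmul_eq_mul, mul_one]
      ring
    · have hda : G.degree a = 1 := by
        rw [← G.card_neighborFinset_eq_degree, hleafN a ha]
        simp
      rw [hleafN a ha, Finset.sum_singleton, hda]
      simp only [hy, if_neg ha, if_pos rfl]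
      ring
  have hy0 : y ≠ 0 := by
    intro h
    have := congrFun h c
    simp [hy] at this
    omega
  have hge := hlargest ((m:ℝ) + 1) y hy0 heigy
  linarith [hcore.1]
end

section
/- Let k ≥ 0 be an integer and G a graph with m edges where m ≥ max{½k²+6k+3, 7k+25}. If the signless Laplacian spectral radius satisfies q(G) ≥ m − k + 1, then G has a vertex of degree at least m − k (i.e., contains K_{1,m−k}). -/
open Matrix Finset

section aux

variable {n : Type*} [Fintype n] [DecidableEq n]

/-- Rayleigh-type bound: if every eigenvalue of a symmetric real matrix is at most `q`,
then the quadratic form is bounded by `q` times the squared norm. -/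
lemma rayleigh_bound_aux (Q : Matrix n n ℝ) (hQ : Q.IsHermitian) (q : ℝ)
    (h : ∀ (μ : ℝ) (y : n → ℝ), y ≠ 0 → Q.mulVec y = μ • y → μ ≤ q) (y : n → ℝ) :
    y ⬝ᵥ Q.mulVec y ≤ q * (y ⬝ᵥ y) := by
  classical
  set b := hQ.eigenvectorBasis with hb
  have hev : ∀ i, hQ.eigenvalues i ≤ q := by
    intro i
    refine h _ (b i) ?_ (hQ.mulVec_eigenvectorBasis i)
    intro h0
    exact b.orthonormal.ne_zero i (by ext j; exact congrFun h0 j)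
  have hinner : ∀ a c : EuclideanSpace ℝ n,
      (inner ℝ a c : ℝ) = (a : n → ℝ) ⬝ᵥ (c : n → ℝ) := by
    intro a c
    simp [PiLp.inner_apply, dotProduct, mul_comm]
  have hQT : Qᵀ = Q := by
    ext i j
    have := congrFun (congrFun hQ j) i
    simpa using this.symm
  have hsym : ∀ a c : n → ℝ, a ⬝ᵥ Q.mulVec c = (Q.mulVec a) ⬝ᵥ c := by
    intro a c
    rw [Matrix.dotProduct_mulVec, ← Matrix.mulVec_transpose, hQT]
  set y' : EuclideanSpace ℝ n := WithLp.toLp 2 y with hy'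
  have key1 : (inner ℝ y' (WithLp.toLp 2 (Q.mulVec y) : EuclideanSpace ℝ n) : ℝ)
      = ∑ i, hQ.eigenvalues i * ((inner ℝ y' (b i) : ℝ) * (inner ℝ (b i) y' : ℝ)) := by
    rw [← b.sum_inner_mul_inner y' (WithLp.toLp 2 (Q.mulVec y) : EuclideanSpace ℝ n)]
    refine Finset.sum_congr rfl fun i _ => ?_
    have hmv : Q.mulVec (b i : n → ℝ) = hQ.eigenvalues i • (b i : n → ℝ) :=
      hQ.mulVec_eigenvectorBasis i
    have : (inner ℝ (b i) (WithLp.toLp 2 (Q.mulVec y) : EuclideanSpace ℝ n) : ℝ)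
        = hQ.eigenvalues i * (inner ℝ (b i) y' : ℝ) := by
      rw [hinner, hinner]
      have h2 := hsym (b i) y
      rw [WithLp.ofLp_toLp, h2, hmv]
      rw [smul_dotProduct, smul_eq_mul]
    rw [this]; ring
  have key2 : (inner ℝ y' y' : ℝ) = ∑ i, (inner ℝ y' (b i) : ℝ) * (inner ℝ (b i) y' : ℝ) :=
    (b.sum_inner_mul_inner y' y').symm
  have hsq : ∀ i, 0 ≤ (inner ℝ y' (b i) : ℝ) * (inner ℝ (b i) y' : ℝ) := by
    intro i
    rw [real_inner_comm y' (b i)]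
    exact mul_self_nonneg _
  have : (inner ℝ y' (WithLp.toLp 2 (Q.mulVec y) : EuclideanSpace ℝ n) : ℝ) ≤ q * (inner ℝ y' y' : ℝ) := by
    rw [key1, key2, Finset.mul_sum]
    exact Finset.sum_le_sum fun i _ => mul_le_mul_of_nonneg_right (hev i) (hsq i)
  rw [hinner, hinner] at this
  exact this

end aux

set_option maxHeartbeats 1000000 in
theorem star_of_large_signless_laplacian_radius {V : Type*} [Fintype V] [DecidableEq V]
    (G : SimpleGraph V) [DecidableRel G.Adj]
    (k m : ℕ) (hm : m = G.edgeFinset.card)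
    (hsize1 : (k : ℝ) ^ 2 / 2 + 6 * k + 3 ≤ (m : ℝ)) (hsize2 : 7 * k + 25 ≤ m)
    (q : ℝ) (x : V → ℝ) (hx0 : x ≠ 0)
    (hx : (G.adjMatrix ℝ + Matrix.diagonal fun v => (G.degree v : ℝ)).mulVec x = q • x)
    (hlargest : ∀ (μ : ℝ) (y : V → ℝ), y ≠ 0 →
      (G.adjMatrix ℝ + Matrix.diagonal fun v => (G.degree v : ℝ)).mulVec y = μ • y → μ ≤ q)
    (hq : (m : ℝ) - k + 1 ≤ q) :
    ∃ v : V, m - k ≤ G.degree v := by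
  classical
  by_contra hcon
  push_neg at hcon
  set Q : Matrix V V ℝ := G.adjMatrix ℝ + Matrix.diagonal fun v => (G.degree v : ℝ) with hQdef
  have hQ : Q.IsHermitian := by
    have h1 : (G.adjMatrix ℝ).IsHermitian := by
      rw [Matrix.IsHermitian, Matrix.conjTranspose_eq_transpose_of_trivial]
      exact G.isSymm_adjMatrix
    have h2 : (Matrix.diagonal fun v => (G.degree v : ℝ)).IsHermitian :=
      Matrix.isHermitian_diagonal _
    exact h1.add h2
  have hQnn : ∀ i j, 0 ≤ Q i j := by
    intro i j
    simp only [hQdef, Matrix.add_apply, SimpleGraph.adjMatrix_apply, Matrix.diagonal_apply]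
    positivity
  have hray : ∀ y : V → ℝ, y ⬝ᵥ Q.mulVec y ≤ q * (y ⬝ᵥ y) :=
    rayleigh_bound_aux Q hQ q hlargest
  -- the entrywise absolute value of x
  set z : V → ℝ := fun v => |x v| with hzdef
  have hzx : z ⬝ᵥ z = x ⬝ᵥ x := by
    simp [hzdef, dotProduct, abs_mul_abs_self]
  have hxQx : x ⬝ᵥ Q.mulVec x = q * (x ⬝ᵥ x) := by
    rw [hx, dotProduct_smul]; simp [mul_comm]
  have hmono : x ⬝ᵥ Q.mulVec x ≤ z ⬝ᵥ Q.mulVec z := by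
    simp only [dotProduct, Matrix.mulVec, Finset.mul_sum]
    refine Finset.sum_le_sum fun i _ => Finset.sum_le_sum fun j _ => ?_
    calc x i * (Q i j * x j) ≤ |x i * (Q i j * x j)| := le_abs_self _
      _ = |x i| * (Q i j * |x j|) := by
          rw [abs_mul, abs_mul, abs_of_nonneg (hQnn i j)]
  have hzQz : z ⬝ᵥ Q.mulVec z = q * (z ⬝ᵥ z) := by
    have h1 : z ⬝ᵥ Q.mulVec z ≤ q * (z ⬝ᵥ z) := hray z
    have h2 : q * (z ⬝ᵥ z) ≤ z ⬝ᵥ Q.mulVec z := by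
      rw [hzx, ← hxQx]; exact hmono
    linarith
  -- z is an eigenvector for q
  have hMpsd : (q • (1 : Matrix V V ℝ) - Q).PosSemidef := by
    rw [Matrix.posSemidef_iff_dotProduct_mulVec]
    constructor
    · rw [Matrix.IsHermitian, Matrix.conjTranspose_sub, Matrix.conjTranspose_smul, hQ.eq]
      simp
    · intro w
      have hw := hray w
      have hstar : star w = w := by
        funext i; simp
      rw [hstar, Matrix.sub_mulVec, Matrix.smul_mulVec, Matrix.one_mulVec,
        dotProduct_sub, dotProduct_smul]
      simp only [smul_eq_mul]
      linarith
  have hMz : (q • (1 : Matrix V V ℝ) - Q).mulVec z = 0 := by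
    rw [← (hMpsd.dotProduct_mulVec_zero_iff z)]
    have hstar : star z = z := by funext i; simp
    rw [hstar, Matrix.sub_mulVec, Matrix.smul_mulVec, Matrix.one_mulVec,
      dotProduct_sub, dotProduct_smul]
    simp only [smul_eq_mul]
    linarith [hzQz]
  have hQz : Q.mulVec z = q • z := by
    have := hMz
    rw [Matrix.sub_mulVec, Matrix.smul_mulVec, Matrix.one_mulVec, sub_eq_zero] at this
    exact this.symm
  -- z is nonzero and nonnegative
  have hz0 : z ≠ 0 := by
    intro h
    apply hx0
    funext v
    have := congrFun h v
    simpa [hzdef, abs_eq_zero] using this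
  have hznn : ∀ v, 0 ≤ z v := fun v => abs_nonneg _
  -- pick the vertex with maximal z value
  have hVne : Nonempty V := by
    by_contra h
    exact hx0 (funext fun v => absurd ⟨v⟩ h)
  obtain ⟨u, -, hu⟩ := Finset.exists_max_image (Finset.univ : Finset V) z ⟨hVne.some, Finset.mem_univ _⟩
  have hzu : 0 < z u := by
    rcases Function.ne_iff.mp hz0 with ⟨v, hv⟩
    have : 0 < z v := lt_of_le_of_ne (hznn v) (Ne.symm (by simpa using hv))
    exact lt_of_lt_of_le this (hu v (Finset.mem_univ v))
  -- normalize
  set y : V → ℝ := fun v => z v / z u with hydef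
  have hyu : y u = 1 := div_self (ne_of_gt hzu)
  have hynn : ∀ v, 0 ≤ y v := fun v => div_nonneg (hznn v) hzu.le
  have hyle : ∀ v, y v ≤ 1 := by
    intro v
    rw [hydef]
    exact div_le_one_of_le₀ (hu v (Finset.mem_univ v)) hzu.le
  have hQy : Q.mulVec y = q • y := by
    have : y = (z u)⁻¹ • z := by
      funext v; simp [hydef, div_eq_inv_mul]
    rw [this, Matrix.mulVec_smul, hQz, smul_comm]
  -- eigen-equation pointwise
  have eig : ∀ v, (G.degree v : ℝ) * y v + ∑ w ∈ G.neighborFinset v, y w = q * y v := by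
    intro v
    have := congrFun hQy v
    rw [hQdef] at this
    rw [Matrix.add_mulVec] at this
    simp only [Pi.add_apply, Pi.smul_apply, smul_eq_mul] at this
    rw [SimpleGraph.adjMatrix_mulVec_apply, Matrix.mulVec_diagonal] at this
    linarith
  -- notation
  set N : Finset V := G.neighborFinset u with hNdef
  set d : ℝ := (G.degree u : ℝ) with hddef
  set S : ℝ := ∑ v ∈ N, y v with hSdef
  have hS : S = q - d := by
    have := eig u
    rw [hyu] at this
    simp only [mul_one] at this
    linarith
  -- degrees of neighbors are at least 1
  have hdeg1 : ∀ v ∈ N, 1 ≤ G.degree v := by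
    intro v hv
    rw [hNdef, SimpleGraph.mem_neighborFinset] at hv
    have : u ∈ G.neighborFinset v := by
      rw [SimpleGraph.mem_neighborFinset]; exact hv.symm
    have hc := Finset.card_pos.mpr ⟨u, this⟩
    rw [SimpleGraph.card_neighborFinset_eq_degree] at hc
    exact hc
  set T : ℝ := ∑ v ∈ N, ((G.degree v : ℝ) - 1) with hTdef
  -- Bound 1
  have bound1 : ∑ v ∈ N, (G.degree v : ℝ) * y v ≤ S + T := by
    rw [hSdef, hTdef, ← Finset.sum_add_distrib]
    refine Finset.sum_le_sum fun v hv => ?_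
    have h1 : (1 : ℝ) ≤ (G.degree v : ℝ) := by exact_mod_cast hdeg1 v hv
    nlinarith [hynn v, hyle v]
  -- Bound 2
  have bound2 : ∑ v ∈ N, ∑ w ∈ G.neighborFinset v, y w ≤ d + T := by
    have : ∀ v ∈ N, ∑ w ∈ G.neighborFinset v, y w ≤ 1 + ((G.degree v : ℝ) - 1) := by
      intro v hv
      have hadj : G.Adj u v := by rwa [hNdef, SimpleGraph.mem_neighborFinset] at hv
      have huv : u ∈ G.neighborFinset v := by
        rw [SimpleGraph.mem_neighborFinset]; exact hadj.symm
      rw [← Finset.insert_erase huv, Finset.sum_insert (Finset.notMem_erase _ _)]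
      have h1 : ∑ w ∈ (G.neighborFinset v).erase u, y w ≤
          ((G.neighborFinset v).erase u).card • (1 : ℝ) :=
        Finset.sum_le_card_nsmul _ _ _ fun w _ => hyle w
      have hcard : ((G.neighborFinset v).erase u).card = G.degree v - 1 := by
        rw [Finset.card_erase_of_mem huv]; rfl
      rw [hcard] at h1
      have h2 : ((G.degree v - 1 : ℕ) : ℝ) = (G.degree v : ℝ) - 1 := by
        have := hdeg1 v hv
        push_cast [Nat.cast_sub this]
        ring
      have h3 : (G.degree v - 1 : ℕ) • (1 : ℝ) = (G.degree v : ℝ) - 1 := by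
        rw [nsmul_eq_mul, mul_one, h2]
      rw [h3] at h1
      linarith [hyu ▸ le_refl (1:ℝ), h1]
    calc ∑ v ∈ N, ∑ w ∈ G.neighborFinset v, y w
        ≤ ∑ v ∈ N, (1 + ((G.degree v : ℝ) - 1)) := Finset.sum_le_sum this
      _ = N.card + T := by rw [Finset.sum_add_distrib]; simp [hTdef]
      _ = d + T := by
          rw [hddef, hNdef, SimpleGraph.card_neighborFinset_eq_degree]
  -- Bound 3 : T ≤ 2 (m - d)
  have bound3 : T ≤ 2 * ((m : ℝ) - d) := by
    have hsub : insert u N ⊆ Finset.univ := Finset.subset_univ _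
    have hunotm : u ∉ N := by
      rw [hNdef, SimpleGraph.mem_neighborFinset]
      exact fun h => G.irrefl h
    have hsum : ∑ v ∈ insert u N, G.degree v ≤ ∑ v, G.degree v :=
      Finset.sum_le_sum_of_subset hsub
    rw [Finset.sum_insert hunotm, SimpleGraph.sum_degrees_eq_twice_card_edges, ← hm] at hsum
    have hsumR : d + ∑ v ∈ N, (G.degree v : ℝ) ≤ 2 * m := by
      rw [hddef]
      push_cast
      exact_mod_cast hsum
    have hcardN : (N.card : ℝ) = d := by
      rw [hddef, hNdef, SimpleGraph.card_neighborFinset_eq_degree]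
    have : T = (∑ v ∈ N, (G.degree v : ℝ)) - N.card := by
      rw [hTdef, Finset.sum_sub_distrib]; simp
    rw [this, hcardN]
    linarith
  -- main inequality
  have main : q * S ≤ S + d + 2 * T := by
    have h1 : q * S = ∑ v ∈ N, ((G.degree v : ℝ) * y v + ∑ w ∈ G.neighborFinset v, y w) := by
      rw [hSdef, Finset.mul_sum]
      exact Finset.sum_congr rfl fun v _ => (eig v).symm
    rw [h1, Finset.sum_add_distrib]
    linarith [bound1, bound2]
  -- degree bound from the contradiction hypothesis
  have hkm : k ≤ m := le_trans (by omega) hsize2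
  have hdu : d ≤ (m : ℝ) - k - 1 := by
    have h := hcon u
    have h2 : G.degree u + 1 + k ≤ m := by omega
    have h3 : ((G.degree u + 1 + k : ℕ) : ℝ) ≤ (m : ℝ) := by exact_mod_cast h2
    push_cast at h3
    rw [hddef]; linarith
  have hd0 : 0 ≤ d := by rw [hddef]; positivity
  have hm2R : 7 * (k : ℝ) + 25 ≤ (m : ℝ) := by exact_mod_cast hsize2
  have hk0 : (0 : ℝ) ≤ k := Nat.cast_nonneg k
  have e1 : q * (q - d) ≤ (q - d) + d + 4 * ((m : ℝ) - d) := by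
    rw [← hS]; linarith [main, bound3]
  have ha : 0 ≤ q - ((m : ℝ) - k + 1) := by linarith
  have hb : 0 ≤ ((m : ℝ) - k - 1) - d := by linarith
  nlinarith [e1, ha, hb, mul_nonneg ha hb, mul_nonneg ha ha,
    mul_nonneg hb (show (0:ℝ) ≤ (m : ℝ) - k - 3 by linarith),
    mul_nonneg ha (show (0:ℝ) ≤ (m : ℝ) - k + 2 by linarith)]
end

section
/- Let G be a graph with signless Laplacian eigenvalue q and nonnegative eigenvector x with maximum entry x_{u*}. If a vertex u satisfies x_u ≥ ½·x_{u*} and q > d(u), then d(u) ≥ q/3. -/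
theorem degree_ge_third_q {V : Type*} [Fintype V] [DecidableEq V]
    (G : SimpleGraph V) [DecidableRel G.Adj]
    (q : ℝ) (x : V → ℝ) (hx0 : x ≠ 0)
    (hx : (G.adjMatrix ℝ + Matrix.diagonal fun v => (G.degree v : ℝ)).mulVec x = q • x)
    (hnn : ∀ v, 0 ≤ x v) (ustar : V) (hmax : ∀ v, x v ≤ x ustar)
    (u : V) (hu : x ustar / 2 ≤ x u) (hqd : (G.degree u : ℝ) < q) :
    q / 3 ≤ (G.degree u : ℝ) := by
  have hpos : 0 < x ustar := by
    rcases Function.ne_iff.mp hx0 with ⟨v, hv⟩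
    exact lt_of_lt_of_le (lt_of_le_of_ne (hnn v) (Ne.symm hv)) (hmax v)
  have hequ := congrFun hx u
  rw [Matrix.add_mulVec] at hequ
  simp only [Pi.add_apply, SimpleGraph.adjMatrix_mulVec_apply, Matrix.mulVec_diagonal,
    Pi.smul_apply, smul_eq_mul] at hequ
  have hsum : ∑ v ∈ G.neighborFinset u, x v ≤ (G.degree u : ℝ) * x ustar := by
    calc ∑ v ∈ G.neighborFinset u, x v ≤ ∑ v ∈ G.neighborFinset u, x ustar :=
          Finset.sum_le_sum fun v _ => hmax v
      _ = (G.degree u : ℝ) * x ustar := by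
          rw [Finset.sum_const, SimpleGraph.card_neighborFinset_eq_degree]; ring
  have key : (q - G.degree u) * (x ustar / 2) ≤ (G.degree u : ℝ) * x ustar := by
    calc (q - G.degree u) * (x ustar / 2) ≤ (q - G.degree u) * x u := by
          apply mul_le_mul_of_nonneg_left hu (by linarith)
      _ = ∑ v ∈ G.neighborFinset u, x v := by linarith
      _ ≤ _ := hsum
  nlinarith
end

section
/- Let G be a graph, x a nonnegative eigenvector of the signless Laplacian with eigenvalue q, u* the vertex maximizing x, and suppose every other vertex u has x_u < ½ x_{u*} and degree d(u) ≤ k+2 with q > k+2. Then for every vertex u ≠ u*: x_u ≤ ((d(u)+1)/(2(q − d(u))))·x_{u*} ≤ ((k+3)/(2(q−k−2)))·x_{u*}. -/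
theorem entry_bound_signless_laplacian {V : Type*} [Fintype V] [DecidableEq V]
    (G : SimpleGraph V) [DecidableRel G.Adj]
    (q : ℝ) (x : V → ℝ) (k : ℕ)
    (hx : (G.adjMatrix ℝ + Matrix.diagonal fun v => (G.degree v : ℝ)).mulVec x = q • x)
    (hnn : ∀ v, 0 ≤ x v) (ustar : V) (hmax : ∀ v, x v ≤ x ustar)
    (hlt : ∀ v, v ≠ ustar → x v < x ustar / 2)
    (hdeg : ∀ v, v ≠ ustar → G.degree v ≤ k + 2)
    (hq : (k : ℝ) + 2 < q) :
    ∀ u, u ≠ ustar →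
      x u ≤ ((G.degree u : ℝ) + 1) / (2 * (q - G.degree u)) * x ustar ∧
      x u ≤ ((k : ℝ) + 3) / (2 * (q - k - 2)) * x ustar := by
  intro u hu
  have hrow := congrFun hx u
  simp only [Matrix.add_mulVec, Pi.add_apply, Matrix.mulVec_diagonal,
    SimpleGraph.adjMatrix_mulVec_apply, Pi.smul_apply, smul_eq_mul] at hrow
  have hd : (G.degree u : ℝ) ≤ (k : ℝ) + 2 := by
    have := hdeg u hu
    exact_mod_cast Nat.cast_le.mpr this |>.trans (by push_cast; linarith)
  have hxs : 0 ≤ x ustar := hnn ustar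
  have hpos : 0 < q - (G.degree u : ℝ) := by linarith
  have hsum : ∑ v ∈ G.neighborFinset u, x v ≤ ((G.degree u : ℝ) + 1) / 2 * x ustar := by
    by_cases hmem : ustar ∈ G.neighborFinset u
    · have hcard : (G.neighborFinset u).card = G.degree u := G.card_neighborFinset_eq_degree u
      rw [← Finset.add_sum_erase _ _ hmem]
      have hbd : ∑ v ∈ (G.neighborFinset u).erase ustar, x v ≤
          ((G.neighborFinset u).erase ustar).card • (x ustar / 2) := by
        apply Finset.sum_le_card_nsmul
        intro v hv
        exact le_of_lt (hlt v (Finset.ne_of_mem_erase hv))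
      rw [Finset.card_erase_of_mem hmem, hcard] at hbd
      have hd1 : 1 ≤ G.degree u := by
        have := Finset.card_pos.mpr ⟨ustar, hmem⟩
        omega
      have : ((G.degree u - 1 : ℕ) : ℝ) = (G.degree u : ℝ) - 1 := by
        push_cast [hd1]; ring
      rw [nsmul_eq_mul, this] at hbd
      nlinarith [hbd]
    · have hbd : ∑ v ∈ G.neighborFinset u, x v ≤
          (G.neighborFinset u).card • (x ustar / 2) := by
        apply Finset.sum_le_card_nsmul
        intro v hv
        have : v ≠ ustar := fun h => hmem (h ▸ hv)
        exact le_of_lt (hlt v this)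
      rw [G.card_neighborFinset_eq_degree u, nsmul_eq_mul] at hbd
      nlinarith [hbd]
  have h1 : x u ≤ ((G.degree u : ℝ) + 1) / (2 * (q - G.degree u)) * x ustar := by
    rw [div_mul_eq_mul_div, le_div_iff₀ (by positivity)]
    nlinarith [hrow, hsum]
  refine ⟨h1, h1.trans ?_⟩
  rw [div_mul_eq_mul_div, div_mul_eq_mul_div, div_le_div_iff₀ (by positivity) (by linarith)]
  nlinarith [mul_nonneg hxs (sub_nonneg.mpr hd), hq, hpos]
end

section
/- For the friendship graph F_n on an odd number n of vertices (consisting of (n−1)/2 triangles sharing a common vertex), the adjacency spectral radius equals (1 + √(4(n−1)+1))/2. -/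
open scoped Classical

/-- The friendship graph consisting of `k` triangles sharing the common vertex `0`;
it has `2 * k + 1` vertices. Vertices `2i - 1` and `2i` are paired into a triangle
with the center. -/
def friendshipGraph (k : ℕ) : SimpleGraph (Fin (2 * k + 1)) :=
  SimpleGraph.fromRel
    (fun u v => u = 0 ∨ (u ≠ 0 ∧ v ≠ 0 ∧ (u.val + 1) / 2 = (v.val + 1) / 2))

/-- The partner of a non-central vertex in its triangle. -/
def fgPartner (k : ℕ) (u : Fin (2 * k + 1)) : Fin (2 * k + 1) :=
  if h : u.val % 2 = 1 then ⟨u.val + 1, by have := u.isLt; omega⟩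
  else ⟨u.val - 1, by have := u.isLt; omega⟩

lemma fgPartner_val {k : ℕ} (u : Fin (2 * k + 1)) :
    (fgPartner k u).val = if u.val % 2 = 1 then u.val + 1 else u.val - 1 := by
  unfold fgPartner; split <;> simp_all

lemma fg_adj {k : ℕ} (u v : Fin (2 * k + 1)) :
    (friendshipGraph k).Adj u v ↔
      u ≠ v ∧ (u = 0 ∨ v = 0 ∨ (u.val + 1) / 2 = (v.val + 1) / 2) := by
  simp only [friendshipGraph, SimpleGraph.fromRel_adj]
  constructor
  · rintro ⟨h, h2⟩
    exact ⟨h, by tauto⟩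
  · rintro ⟨h, h2⟩
    refine ⟨h, ?_⟩
    by_cases hu : u = 0
    · tauto
    · by_cases hv : v = 0 <;> tauto

lemma fg_adj_of_ne {k : ℕ} (u v : Fin (2 * k + 1)) (hu : u ≠ 0) :
    (friendshipGraph k).Adj u v ↔ (v = 0 ∨ v = fgPartner k u) := by
  rw [fg_adj]
  have hb := u.isLt; have hb' := v.isLt
  have hu' : u.val ≠ 0 := fun h => hu (Fin.ext h)
  have h0 : ((0 : Fin (2 * k + 1))).val = 0 := rfl
  simp only [ne_eq, Fin.ext_iff, h0, fgPartner_val]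
  by_cases hp : u.val % 2 = 1 <;> simp only [hp, if_true, if_false] <;> omega

lemma fgPartner_ne_zero {k : ℕ} (u : Fin (2 * k + 1)) (hu : u ≠ 0) :
    fgPartner k u ≠ 0 := by
  have hu' : u.val ≠ 0 := fun h => hu (Fin.ext h)
  have : (fgPartner k u).val ≠ 0 := by
    rw [fgPartner_val]; split <;> omega
  exact fun h => this (by rw [h]; rfl)

lemma fgPartner_fgPartner {k : ℕ} (u : Fin (2 * k + 1)) (hu : u ≠ 0) :
    fgPartner k (fgPartner k u) = u := by
  have hu' : u.val ≠ 0 := fun h => hu (Fin.ext h)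
  have hb := u.isLt
  apply Fin.ext
  rw [fgPartner_val, fgPartner_val]
  by_cases hp : u.val % 2 = 1 <;> simp only [hp, if_true, if_false]
  · have : (u.val + 1) % 2 = 0 := by omega
    simp [this]
  · have h2 : u.val % 2 = 0 := by omega
    have : (u.val - 1) % 2 = 1 := by omega
    simp [this]; omega

lemma fg_adj_zero {k : ℕ} (v : Fin (2 * k + 1)) :
    (friendshipGraph k).Adj 0 v ↔ v ≠ 0 := by
  rw [fg_adj]
  constructor
  · rintro ⟨h, _⟩; exact fun hv => h hv.symm
  · intro hv; exact ⟨fun h => hv h.symm, Or.inl rfl⟩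

lemma fg_mulVec_ne {k : ℕ} (x : Fin (2 * k + 1) → ℝ) (u : Fin (2 * k + 1)) (hu : u ≠ 0) :
    ((friendshipGraph k).adjMatrix ℝ).mulVec x u = x 0 + x (fgPartner k u) := by
  rw [SimpleGraph.adjMatrix_mulVec_apply]
  have hset : (friendshipGraph k).neighborFinset u = {0, fgPartner k u} := by
    ext v
    simp [SimpleGraph.mem_neighborFinset, fg_adj_of_ne u v hu]
  rw [hset, Finset.sum_pair (fgPartner_ne_zero u hu).symm]

lemma fg_mulVec_zero {k : ℕ} (x : Fin (2 * k + 1) → ℝ) :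
    ((friendshipGraph k).adjMatrix ℝ).mulVec x 0
      = ∑ v ∈ ({0}ᶜ : Finset (Fin (2 * k + 1))), x v := by
  rw [SimpleGraph.adjMatrix_mulVec_apply]
  congr 1
  ext v
  simp [SimpleGraph.mem_neighborFinset, fg_adj_zero]

lemma fg_card_compl {k : ℕ} : (({0}ᶜ : Finset (Fin (2 * k + 1)))).card = 2 * k := by
  rw [Finset.card_compl, Finset.card_singleton, Fintype.card_fin]
  omega

theorem friendship_spectral_radius (k : ℕ) (hk : 1 ≤ k)
    (ρ : ℝ) (x : Fin (2 * k + 1) → ℝ) (hx0 : x ≠ 0)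
    (hx : ((friendshipGraph k).adjMatrix ℝ).mulVec x = ρ • x)
    (hlargest : ∀ (μ : ℝ) (y : Fin (2 * k + 1) → ℝ), y ≠ 0 →
      ((friendshipGraph k).adjMatrix ℝ).mulVec y = μ • y → μ ≤ ρ) :
    ρ = (1 + Real.sqrt (4 * (((2 * k + 1 : ℕ) : ℝ) - 1) + 1)) / 2 := by
  have harg : (4 * (((2 * k + 1 : ℕ) : ℝ) - 1) + 1) = 8 * k + 1 := by push_cast; ring
  rw [harg]
  set s : ℝ := Real.sqrt (8 * k + 1) with hs
  set ρ₀ : ℝ := (1 + s) / 2 with hρ₀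
  have hs2 : s * s = 8 * k + 1 := Real.mul_self_sqrt (by positivity)
  have hs3 : 3 ≤ s := by
    have h9 : Real.sqrt 9 ≤ s := by
      apply Real.sqrt_le_sqrt
      have : (1:ℝ) ≤ k := by exact_mod_cast hk
      linarith
    have h9' : Real.sqrt 9 = 3 := by
      rw [show (9:ℝ) = 3 ^ 2 by norm_num]
      exact Real.sqrt_sq (by norm_num)
    linarith
  have hρ₀2 : 2 ≤ ρ₀ := by rw [hρ₀]; linarith
  have hquad : ρ₀ * (ρ₀ - 1) = 2 * k := by rw [hρ₀]; nlinarith [hs2]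
  -- lower bound: ρ₀ ≤ ρ via explicit eigenvector
  set y : Fin (2 * k + 1) → ℝ := fun v => if v = 0 then ρ₀ - 1 else 1 with hy
  have hy1 : y ⟨1, by omega⟩ = 1 := by
    rw [hy]
    have : (⟨1, by omega⟩ : Fin (2 * k + 1)) ≠ 0 := by
      intro h; exact absurd (congrArg Fin.val h) (by simp)
    simp [this]
  have hyne : y ≠ 0 := by
    intro h
    rw [h] at hy1
    simpa using hy1
  have hyeig : ((friendshipGraph k).adjMatrix ℝ).mulVec y = ρ₀ • y := by
    funext v
    by_cases hv : v = 0
    · subst hv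
      rw [fg_mulVec_zero]
      have hall : ∀ w ∈ ({0}ᶜ : Finset (Fin (2 * k + 1))), y w = (1:ℝ) := by
        intro w hw
        have hwne : w ≠ 0 := by simpa using hw
        simp [hy, hwne]
      have hsum : ∑ w ∈ ({0}ᶜ : Finset (Fin (2 * k + 1))), y w
          = (2 * k : ℝ) := by
        rw [Finset.sum_congr rfl hall, Finset.sum_const, fg_card_compl]
        simp
      rw [hsum]
      have hy0 : y 0 = ρ₀ - 1 := if_pos rfl
      simp only [Pi.smul_apply, smul_eq_mul, hy0]
      linarith [hquad]
    · rw [fg_mulVec_ne y v hv]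
      have hp : fgPartner k v ≠ 0 := fgPartner_ne_zero v hv
      simp only [Pi.smul_apply, smul_eq_mul, hy, if_pos rfl, if_neg hv, if_neg hp]
      ring
  have hge : ρ₀ ≤ ρ := hlargest ρ₀ y hyne hyeig
  have hρ2 : 2 ≤ ρ := le_trans hρ₀2 hge
  -- eigen equations for x
  have hxv : ∀ u, ((friendshipGraph k).adjMatrix ℝ).mulVec x u = ρ * x u := by
    intro u; rw [hx]; simp
  have hpair : ∀ u : Fin (2 * k + 1), u ≠ 0 →
      x 0 + x (fgPartner k u) = ρ * x u := by
    intro u hu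
    rw [← fg_mulVec_ne x u hu]; exact hxv u
  -- show ρ * (ρ - 1) = 2k
  have hkey : ρ * (ρ - 1) = 2 * k := by
    by_cases hc : x 0 = 0
    · -- then ρ² = 1, contradicting ρ ≥ 2
      exfalso
      obtain ⟨u, hu⟩ : ∃ u, x u ≠ 0 := by
        by_contra h
        push_neg at h
        exact hx0 (funext h)
      have hune : u ≠ 0 := fun h => hu (h ▸ hc)
      have e1 := hpair u hune
      have e2 := hpair (fgPartner k u) (fgPartner_ne_zero u hune)
      rw [fgPartner_fgPartner u hune] at e2
      rw [hc] at e1 e2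
      rw [zero_add] at e1 e2
      rw [e1] at e2
      have h3 : x u = ρ * (ρ * x u) := e2
      have h4 : x u * (ρ * ρ - 1) = 0 := by linear_combination (-1 : ℝ) * h3
      rcases mul_eq_zero.mp h4 with h5 | h5
      · exact hu h5
      · nlinarith [hρ2]
    · obtain ⟨u0, hu0⟩ : ∃ u0 : Fin (2 * k + 1), u0 ≠ 0 := by
        refine ⟨⟨1, by omega⟩, ?_⟩
        intro h; exact absurd (congrArg Fin.val h) (by simp)
      have hconst : ∀ u : Fin (2 * k + 1), u ≠ 0 → x u = x 0 / (ρ - 1) := by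
        intro u hu
        have e1 := hpair u hu
        have e2 := hpair (fgPartner k u) (fgPartner_ne_zero u hu)
        rw [fgPartner_fgPartner u hu] at e2
        have heq : x u = x (fgPartner k u) := by
          have hd : (ρ + 1) * (x u - x (fgPartner k u)) = 0 := by
            linear_combination e2 - e1
          rcases mul_eq_zero.mp hd with h5 | h5
          · exact absurd h5 (by linarith)
          · linarith
        rw [← heq] at e1
        have hρ1 : ρ - 1 ≠ 0 := by
          intro h; linarith [hρ2]
        rw [eq_div_iff hρ1]
        linarith [e1]
      have hcenter := hxv 0
      rw [fg_mulVec_zero] at hcenter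
      have hsum : ∑ w ∈ ({0}ᶜ : Finset (Fin (2 * k + 1))), x w
          = (2 * k : ℝ) * (x 0 / (ρ - 1)) := by
        rw [Finset.sum_congr rfl (fun w hw => hconst w (by simpa using hw))]
        rw [Finset.sum_const, fg_card_compl]
        simp [mul_comm]
      rw [hsum] at hcenter
      have hρ1 : ρ - 1 ≠ 0 := by linarith
      field_simp at hcenter
      -- hcenter : 2 * k * x 0 = ρ * x 0 * (ρ - 1)  (some form)
      have : (2 * (k:ℝ)) * x 0 = ρ * (ρ - 1) * x 0 := by rw [hcenter]
      have := mul_right_cancel₀ hc this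
      linarith [this]
  -- conclude ρ = ρ₀
  have hle : ρ ≤ ρ₀ := by nlinarith [hkey, hquad, hge, hρ₀2]
  linarith [hge, hle]
end

section
/- Let G be a graph with m edges, adjacency spectral radius ρ ≥ √(m−k), vertex partition {u*} ∪ A ∪ B with A = N(u*) and B = V \ N[u*], and B = B1 ∪ B2 where B1 are the vertices of B isolated within B. If the inequality ρ² ≤ |A| + (2e(A)+2e(B))/(ρ−1) + e(A,B1)/(ρ−1) + e(A,B2) holds and ρ > 2k+3, then e(B) ≤ k. -/
open Finset
open scoped Classical

set_option maxHeartbeats 1000000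

/-- The number of edges of `G` with both endpoints in `S`. -/
noncomputable def edgesWithin {V : Type*} [Fintype V] [DecidableEq V]
    (G : SimpleGraph V) [DecidableRel G.Adj] (S : Finset V) : ℕ :=
  (G.edgeFinset.filter fun e => ∀ v ∈ e, v ∈ S).card

/-- The number of edges of `G` with one endpoint in `S` and the other in `T`. -/
noncomputable def edgesBetween {V : Type*} [Fintype V] [DecidableEq V]
    (G : SimpleGraph V) [DecidableRel G.Adj] (S T : Finset V) : ℕ :=
  (G.edgeFinset.filter fun e => ∃ a ∈ S, ∃ b ∈ T, e = s(a, b)).card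

theorem edges_in_B_le_k {V : Type*} [Fintype V] [DecidableEq V]
    (G : SimpleGraph V) [DecidableRel G.Adj]
    (k m : ℕ) (hm : m = G.edgeFinset.card) (ustar : V) (ρ : ℝ)
    (A : Finset V) (hA : A = G.neighborFinset ustar)
    (B : Finset V) (hB : B = Finset.univ \ insert ustar A)
    (B1 : Finset V) (hB1 : B1 = B.filter fun b => ∀ v ∈ B, ¬ G.Adj b v)
    (B2 : Finset V) (hB2 : B2 = B \ B1)
    (hρ : Real.sqrt ((m : ℝ) - k) ≤ ρ)
    (hineq : ρ ^ 2 ≤ (A.card : ℝ) +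
      (2 * (edgesWithin G A : ℝ) + 2 * (edgesWithin G B : ℝ)) / (ρ - 1) +
      (edgesBetween G A B1 : ℝ) / (ρ - 1) + (edgesBetween G A B2 : ℝ))
    (hρk : (2 * (k : ℝ) + 3) < ρ) :
    edgesWithin G B ≤ k := by
  classical
  have hAu : ustar ∉ A := by simp [hA]
  have hBu : ustar ∉ B := by simp [hB]
  have hAB : ∀ x ∈ A, x ∉ B := by intro x hx; simp [hB, hx]
  have hB1sub : B1 ⊆ B := by rw [hB1]; exact filter_subset _ _
  have hB2sub : B2 ⊆ B := by rw [hB2]; exact sdiff_subset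
  have hB12 : Disjoint B1 B2 := by rw [hB2]; exact Finset.disjoint_sdiff
  set I := G.incidenceFinset ustar with hI
  set EA := G.edgeFinset.filter (fun e => ∀ v ∈ e, v ∈ A) with hEA
  set EB := G.edgeFinset.filter (fun e => ∀ v ∈ e, v ∈ B) with hEB
  set E1 := G.edgeFinset.filter (fun e => ∃ a ∈ A, ∃ b ∈ B1, e = s(a, b)) with hE1
  set E2 := G.edgeFinset.filter (fun e => ∃ a ∈ A, ∃ b ∈ B2, e = s(a, b)) with hE2
  have hIcard : I.card = A.card := by
    rw [hI, SimpleGraph.card_incidenceFinset_eq_degree, hA]; rfl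
  have hImem : ∀ e, e ∈ I → ustar ∈ e ∧ e ∈ G.edgeFinset := by
    intro e he
    rw [hI, SimpleGraph.mem_incidenceFinset] at he
    exact ⟨he.2, SimpleGraph.mem_edgeFinset.2 he.1⟩
  -- disjointness
  have dIA : Disjoint I EA := by
    rw [Finset.disjoint_left]; intro e heI heA
    exact hAu ((Finset.mem_filter.1 heA).2 ustar (hImem e heI).1)
  have dIB : Disjoint I EB := by
    rw [Finset.disjoint_left]; intro e heI heB
    exact hBu ((Finset.mem_filter.1 heB).2 ustar (hImem e heI).1)
  have dI12 : ∀ (T : Finset V), T ⊆ B →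
      Disjoint I (G.edgeFinset.filter (fun e => ∃ a ∈ A, ∃ b ∈ T, e = s(a, b))) := by
    intro T hT
    rw [Finset.disjoint_left]; intro e heI heT
    obtain ⟨a, ha, b, hb, rfl⟩ := (Finset.mem_filter.1 heT).2
    rcases Sym2.mem_iff.1 (hImem _ heI).1 with h | h
    · exact hAu (h ▸ ha)
    · exact hBu (h ▸ hT hb)
  have dA12 : ∀ (T : Finset V), T ⊆ B →
      Disjoint EA (G.edgeFinset.filter (fun e => ∃ a ∈ A, ∃ b ∈ T, e = s(a, b))) := by
    intro T hT
    rw [Finset.disjoint_left]; intro e heA heT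
    obtain ⟨a, ha, b, hb, rfl⟩ := (Finset.mem_filter.1 heT).2
    exact hAB b ((Finset.mem_filter.1 heA).2 b (by simp)) (hT hb)
  have dB12 : ∀ (T : Finset V), T ⊆ B →
      Disjoint EB (G.edgeFinset.filter (fun e => ∃ a ∈ A, ∃ b ∈ T, e = s(a, b))) := by
    intro T hT
    rw [Finset.disjoint_left]; intro e heB heT
    obtain ⟨a, ha, b, hb, rfl⟩ := (Finset.mem_filter.1 heT).2
    exact hAB a ha ((Finset.mem_filter.1 heB).2 a (by simp))
  have dAB : Disjoint EA EB := by
    rw [Finset.disjoint_left]; intro e heA heB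
    have hx : ∃ x, x ∈ e := ⟨e.out.1, Sym2.out_fst_mem e⟩
    obtain ⟨x, hx⟩ := hx
    exact hAB x ((Finset.mem_filter.1 heA).2 x hx) ((Finset.mem_filter.1 heB).2 x hx)
  have d12 : Disjoint E1 E2 := by
    rw [Finset.disjoint_left]; intro e he1 he2
    obtain ⟨a, ha, b, hb, rfl⟩ := (Finset.mem_filter.1 he1).2
    obtain ⟨a', ha', b', hb', heq⟩ := (Finset.mem_filter.1 he2).2
    rcases Sym2.eq_iff.1 heq with ⟨h1, h2⟩ | ⟨h1, h2⟩
    · exact (Finset.disjoint_left.1 hB12) hb (h2 ▸ hb')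
    · exact hAB a' ha' (h2 ▸ hB1sub hb)
  have dA1 := dA12 B1 hB1sub; rw [← hE1] at dA1
  have dA2 := dA12 B2 hB2sub; rw [← hE2] at dA2
  have dB1 := dB12 B1 hB1sub; rw [← hE1] at dB1
  have dB2 := dB12 B2 hB2sub; rw [← hE2] at dB2
  have dI1 := dI12 B1 hB1sub; rw [← hE1] at dI1
  have dI2 := dI12 B2 hB2sub; rw [← hE2] at dI2
  -- counting
  have hcount : A.card + edgesWithin G A + edgesWithin G B
      + edgesBetween G A B1 + edgesBetween G A B2 ≤ m := by
    have hsub : I ∪ EA ∪ EB ∪ E1 ∪ E2 ⊆ G.edgeFinset := by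
      intro e he
      simp only [Finset.mem_union] at he
      rcases he with ((((h | h) | h) | h) | h)
      · exact (hImem e h).2
      all_goals exact Finset.filter_subset _ _ h
    have hc : (I ∪ EA ∪ EB ∪ E1 ∪ E2).card
        = I.card + EA.card + EB.card + E1.card + E2.card := by
      rw [Finset.card_union_of_disjoint (by
          simp only [Finset.disjoint_union_left]; exact ⟨⟨⟨dI2, dA2⟩, dB2⟩, d12⟩),
        Finset.card_union_of_disjoint (by
          simp only [Finset.disjoint_union_left]; exact ⟨⟨dI1, dA1⟩, dB1⟩),
        Finset.card_union_of_disjoint (by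
          simp only [Finset.disjoint_union_left]; exact ⟨dIB, dAB⟩),
        Finset.card_union_of_disjoint dIA]
    calc A.card + edgesWithin G A + edgesWithin G B
          + edgesBetween G A B1 + edgesBetween G A B2
        = (I ∪ EA ∪ EB ∪ E1 ∪ E2).card := by
          rw [hc, hIcard]; rfl
      _ ≤ G.edgeFinset.card := Finset.card_le_card hsub
      _ = m := hm.symm
  -- arithmetic
  set a := (edgesWithin G A : ℝ) with ha'
  set b := (edgesWithin G B : ℝ) with hb'
  set c := (edgesBetween G A B1 : ℝ) with hc'
  set d := (edgesBetween G A B2 : ℝ) with hd'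
  have hm' : (A.card : ℝ) + a + b + c + d ≤ m := by
    have := hcount
    push_cast [ha', hb', hc', hd']
    exact_mod_cast this
  have hsq : (m : ℝ) - k ≤ ρ ^ 2 := by
    rcases le_or_gt ((m : ℝ) - k) 0 with h | h
    · nlinarith [sq_nonneg ρ]
    · nlinarith [Real.sq_sqrt h.le, Real.sqrt_nonneg ((m : ℝ) - k)]
  have hP1 : (0 : ℝ) < ρ - 1 := by nlinarith [Nat.cast_nonneg (α := ℝ) k]
  have hknn : (0 : ℝ) ≤ (k : ℝ) := Nat.cast_nonneg k
  have hann : (0 : ℝ) ≤ a := Nat.cast_nonneg _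
  have hbnn : (0 : ℝ) ≤ b := Nat.cast_nonneg _
  have hcnn : (0 : ℝ) ≤ c := Nat.cast_nonneg _
  have hdnn : (0 : ℝ) ≤ d := Nat.cast_nonneg _
  have key : a + b + c - k ≤ (2 * a + 2 * b + c) / (ρ - 1) := by
    have h1 : (2 * a + 2 * b) / (ρ - 1) + c / (ρ - 1)
        = (2 * a + 2 * b + c) / (ρ - 1) := by ring
    nlinarith [hineq, hsq, hm', h1]
  have key2 : (a + b + c - k) * (ρ - 1) ≤ 2 * a + 2 * b + c := by
    calc (a + b + c - k) * (ρ - 1)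
        ≤ ((2 * a + 2 * b + c) / (ρ - 1)) * (ρ - 1) := by
          exact mul_le_mul_of_nonneg_right key hP1.le
      _ = 2 * a + 2 * b + c := div_mul_cancel₀ _ hP1.ne'
  have h3 : (0:ℝ) ≤ ρ - 3 := by linarith
  have h2 : (0:ℝ) ≤ ρ - 2 := by linarith
  have hbk : b * (ρ - 3) ≤ (k : ℝ) * (ρ - 1) := by
    linarith [mul_nonneg hann h3, mul_nonneg hcnn h2, key2]
  have hblt : b < (k : ℝ) + 1 := by nlinarith [hbk]
  have hfin : (edgesWithin G B : ℝ) < ((k + 1 : ℕ) : ℝ) := by push_cast; exact hblt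
  exact Nat.lt_succ_iff.1 (by exact_mod_cast hfin)
end
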